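/- arXiv:2109.06328 — 4 statements merged into one kernel-verified Lean document; each statement's English description precedes it below -/
import Mathlib

section
/- For any fixed partial strategies ĝ² and ĝ³, there exist maps f̄¹_t, h̄¹_t (for t < T) and d̄¹_T such that, along every closed-loop trajectory generated by any realization (x̂_0 ∈ X̂₀, w_{0:T−1}) and any sequence of subsystem-1 actions u¹_{0:T−1}, the state S¹_t := (x̂_t, C²_t), where C²_t := (z²_1, …, z²_t), satisfies S¹_{t+1} = f̄¹_t(S¹_t, u¹_t, w_t), the observation satisfies z¹_{t+1} = h̄¹_t(S¹_t, u¹_t), and the terminal cost satisfies d̄¹_T(S¹_T) = d̂(x̂_T). -/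
/-- The reduced/equivalent nested three-subsystem system. -/
structure Red3 where
  T : ℕ
  hT : 1 ≤ T
  X : ℕ → Type
  U1 : ℕ → Type
  U2 : ℕ → Type
  U3 : ℕ → Type
  W : ℕ → Type
  Z1 : ℕ → Type
  Z2 : ℕ → Type
  Z3 : ℕ → Type
  rho2 : ∀ t, Z1 t → Z2 t
  rho3 : ∀ t, Z2 t → Z3 t
  f : ∀ t, X t → U1 t → U2 t → U3 t → W t → X (t+1)
  h : ∀ t, X t → U1 t → U2 t → U3 t → Z1 (t+1)
  X0 : Set (X 0)
  X0ne : X0.Nonempty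
  d : X T → ℝ
  Xfin : ∀ t, Finite (X t)
  Xne : ∀ t, Nonempty (X t)
  U1fin : ∀ t, Finite (U1 t)
  U1ne : ∀ t, Nonempty (U1 t)
  U2fin : ∀ t, Finite (U2 t)
  U2ne : ∀ t, Nonempty (U2 t)
  U3fin : ∀ t, Finite (U3 t)
  U3ne : ∀ t, Nonempty (U3 t)
  Wfin : ∀ t, Finite (W t)
  Wne : ∀ t, Nonempty (W t)
  Z1fin : ∀ t, Finite (Z1 t)
  Z2fin : ∀ t, Finite (Z2 t)
  Z3fin : ∀ t, Finite (Z3 t)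

namespace Red3

variable (S : Red3)

/-- A partial strategy of subsystem 2: `u²_t = ĝ²_t(z²_{1:t})`. -/
def St2 := ∀ t : ℕ, (∀ ℓ : Fin t, S.Z2 (ℓ.1+1)) → S.U2 t

/-- A partial strategy of subsystem 3: `u³_t = ĝ³_t(z³_{1:t})`. -/
def St3 := ∀ t : ℕ, (∀ ℓ : Fin t, S.Z3 (ℓ.1+1)) → S.U3 t

/-- Closed-loop trajectory when subsystem 1 applies an open-loop action
sequence `u1` while subsystems 2 and 3 play `g2` and `g3`; it carries the
state and the `z¹`-observation history. -/
def olt (g2 : S.St2) (g3 : S.St3) (x0 : S.X 0) (w : ∀ t, S.W t) (u1 : ∀ t, S.U1 t) :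
    ∀ t : ℕ, S.X t × (∀ ℓ : Fin t, S.Z1 (ℓ.1+1))
  | 0 => (x0, fun i => i.elim0)
  | t+1 =>
    let p := olt g2 g3 x0 w u1 t
    let u2 := g2 t (fun ℓ => S.rho2 (ℓ.1+1) (p.2 ℓ))
    let u3 := g3 t (fun ℓ => S.rho3 (ℓ.1+1) (S.rho2 (ℓ.1+1) (p.2 ℓ)))
    (S.f t p.1 (u1 t) u2 u3 (w t),
     Fin.snoc (α := fun ℓ : Fin (t+1) => S.Z1 (ℓ.1+1)) p.2 (S.h t p.1 (u1 t) u2 u3))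

end Red3

namespace Red3

variable (S : Red3)

/-- The state `S¹_t = (x̂_t, z²_{1:t})` of the centralized problem for
subsystem 1, along the closed-loop trajectory. -/
def sOne (g2 : S.St2) (g3 : S.St3) (x0 : S.X 0) (w : ∀ t, S.W t) (u1 : ∀ t, S.U1 t)
    (t : ℕ) : S.X t × (∀ ℓ : Fin t, S.Z2 (ℓ.1+1)) :=
  ((S.olt g2 g3 x0 w u1 t).1,
   fun ℓ => S.rho2 (ℓ.1+1) ((S.olt g2 g3 x0 w u1 t).2 ℓ))

end Red3

/-- for fixed `ĝ²`, `ĝ³` there are maps `f̄¹_t`, `h̄¹_t`, `d̄¹_T`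
governing the evolution of the state `S¹_t = (x̂_t, C²_t)`, the observation
`z¹_{t+1}` and the terminal cost along every closed-loop trajectory. -/
theorem stmt2 (S : Red3) (g2 : S.St2) (g3 : S.St3) :
    ∃ (fbar : ∀ t, (S.X t × (∀ ℓ : Fin t, S.Z2 (ℓ.1+1))) → S.U1 t → S.W t →
        (S.X (t+1) × (∀ ℓ : Fin (t+1), S.Z2 (ℓ.1+1))))
      (hbar : ∀ t, (S.X t × (∀ ℓ : Fin t, S.Z2 (ℓ.1+1))) → S.U1 t → S.Z1 (t+1))
      (dbar : (S.X S.T × (∀ ℓ : Fin S.T, S.Z2 (ℓ.1+1))) → ℝ),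
      ∀ x0 ∈ S.X0, ∀ (w : ∀ t, S.W t) (u1 : ∀ t, S.U1 t),
        (∀ t < S.T,
          S.sOne g2 g3 x0 w u1 (t+1) =
            fbar t (S.sOne g2 g3 x0 w u1 t) (u1 t) (w t) ∧
          (S.olt g2 g3 x0 w u1 (t+1)).2 (Fin.last t) =
            hbar t (S.sOne g2 g3 x0 w u1 t) (u1 t)) ∧
        dbar (S.sOne g2 g3 x0 w u1 S.T) = S.d (S.olt g2 g3 x0 w u1 S.T).1 := by

  classical
  refine ⟨fun t p u1t wt =>
      (S.f t p.1 u1t (g2 t p.2) (g3 t (fun ℓ => S.rho3 (ℓ.1+1) (p.2 ℓ))) wt,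
       Fin.snoc (α := fun ℓ : Fin (t+1) => S.Z2 (ℓ.1+1)) p.2
         (S.rho2 (t+1) (S.h t p.1 u1t (g2 t p.2)
           (g3 t (fun ℓ => S.rho3 (ℓ.1+1) (p.2 ℓ)))))),
    fun t p u1t =>
      S.h t p.1 u1t (g2 t p.2) (g3 t (fun ℓ => S.rho3 (ℓ.1+1) (p.2 ℓ))),
    fun p => S.d p.1, ?_⟩
  intro x0 _ w u1
  refine ⟨fun t _ => ?_, rfl⟩
  constructor
  · show _ = _
    refine Prod.ext ?_ ?_
    · rfl
    · funext ℓ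
      simp only [Red3.sOne, Red3.olt]
      refine Fin.lastCases ?_ (fun i => ?_) ℓ
      · simp [Fin.snoc_last]
      · simp [Fin.snoc_castSucc]
  · simp only [Red3.sOne, Red3.olt, Fin.snoc_last]
end

section
/- For any fixed partial strategies ĝ² and ĝ³ of subsystems 2 and 3, the minimum over all subsystem-1 strategies ĝ¹ of the worst-case cost J¹(ĝ¹) equals the minimum over structured strategies of the form u¹_t = φ_t(Π¹_t(z¹_{1:t}, u¹_{0:t−1}), z²_{1:t}) for some maps φ_t; equivalently, for every subsystem-1 strategy ĝ¹ there exists a structured strategy of this form whose worst-case cost is no larger than J¹(ĝ¹). -/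
section Hist

variable {β : ℕ → Type*}

/-- restriction of a history to a prefix -/
def hrestr {t : ℕ} (p : ∀ ℓ : Fin t, β ℓ.1) (s : ℕ) (hs : s ≤ t) :
    ∀ ℓ : Fin s, β ℓ.1 := fun ℓ => p ⟨ℓ.1, lt_of_lt_of_le ℓ.2 hs⟩

@[simp] lemma hrestr_self {t : ℕ} (p : ∀ ℓ : Fin t, β ℓ.1) : hrestr p t le_rfl = p := by
  funext ℓ; simp [hrestr]

lemma hsnoc_lt {t : ℕ} (p : ∀ ℓ : Fin t, β ℓ.1) (c : β t) (j : ℕ) (hj : j < t)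
    (hj' : j < t + 1) :
    Fin.snoc (α := fun ℓ : Fin (t+1) => β ℓ.1) p c ⟨j, hj'⟩ = p ⟨j, hj⟩ := by
  exact Fin.snoc_castSucc (α := fun ℓ : Fin (t+1) => β ℓ.1) c p ⟨j, hj⟩

lemma hsnoc_last {t : ℕ} (p : ∀ ℓ : Fin t, β ℓ.1) (c : β t) (hj' : t < t + 1) :
    Fin.snoc (α := fun ℓ : Fin (t+1) => β ℓ.1) p c ⟨t, hj'⟩ = c := by
  exact Fin.snoc_last (α := fun ℓ : Fin (t+1) => β ℓ.1) c p

lemma hrestr_snoc {t : ℕ} (p : ∀ ℓ : Fin t, β ℓ.1) (c : β t) (s : ℕ) (hs : s ≤ t)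
    (hs' : s ≤ t + 1) :
    hrestr (Fin.snoc (α := fun ℓ : Fin (t+1) => β ℓ.1) p c) s hs' = hrestr p s hs := by
  funext ℓ
  exact hsnoc_lt p c ℓ.1 _ _

lemma hsnoc_inj {t : ℕ} {p p' : ∀ ℓ : Fin t, β ℓ.1} {c c' : β t}
    (h : Fin.snoc (α := fun ℓ : Fin (t+1) => β ℓ.1) p c =
      Fin.snoc (α := fun ℓ : Fin (t+1) => β ℓ.1) p' c') : p = p' ∧ c = c' := by
  constructor
  · funext ℓ
    have := congrFun h (Fin.castSucc ℓ)
    simpa using this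
  · have := congrFun h (Fin.last t)
    simpa using this

end Hist



namespace Red3

variable (S : Red3)

/-- A subsystem-1 strategy: `u¹_t = ĝ¹_t(z¹_{1:t}, u¹_{0:t-1})`. -/
def St1 := ∀ t : ℕ, (∀ ℓ : Fin t, S.Z1 (ℓ.1+1)) → (∀ ℓ : Fin t, S.U1 ℓ.1) → S.U1 t

/-- Closed-loop trajectory under a subsystem-1 strategy `g1` (with `g2`, `g3`
fixed): state, `z¹`-observation history and subsystem-1 action history. -/
def clt (g2 : S.St2) (g3 : S.St3) (g1 : S.St1) (x0 : S.X 0) (w : ∀ t, S.W t) :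
    ∀ t : ℕ, S.X t × (∀ ℓ : Fin t, S.Z1 (ℓ.1+1)) × (∀ ℓ : Fin t, S.U1 ℓ.1)
  | 0 => (x0, fun i => i.elim0, fun i => i.elim0)
  | t+1 =>
    let p := clt g2 g3 g1 x0 w t
    let u1 := g1 t p.2.1 p.2.2
    let u2 := g2 t (fun ℓ => S.rho2 (ℓ.1+1) (p.2.1 ℓ))
    let u3 := g3 t (fun ℓ => S.rho3 (ℓ.1+1) (S.rho2 (ℓ.1+1) (p.2.1 ℓ)))
    (S.f t p.1 u1 u2 u3 (w t),
     Fin.snoc (α := fun ℓ : Fin (t+1) => S.Z1 (ℓ.1+1)) p.2.1 (S.h t p.1 u1 u2 u3),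
     Fin.snoc (α := fun ℓ : Fin (t+1) => S.U1 ℓ.1) p.2.2 u1)

/-- Worst-case cost of a subsystem-1 strategy (with `g2`, `g3` fixed). -/
noncomputable def J1 (g2 : S.St2) (g3 : S.St3) (g1 : S.St1) : ℝ :=
  sSup {r | ∃ x0 ∈ S.X0, ∃ w : ∀ t, S.W t, r = S.d (S.clt g2 g3 g1 x0 w S.T).1}

/-- The subsystem-1 information state `Π¹_t(z¹_{1:t}, u¹_{0:t-1})`. -/
def Pi1 (g2 : S.St2) (g3 : S.St3) (t : ℕ)
    (z : ∀ ℓ : Fin t, S.Z1 (ℓ.1+1)) (u : ∀ ℓ : Fin t, S.U1 ℓ.1) : Set (S.X t) :=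
  {x | ∃ u1 : ∀ s, S.U1 s, (∀ ℓ : Fin t, u1 ℓ.1 = u ℓ) ∧
    ∃ x0 ∈ S.X0, ∃ w : ∀ s, S.W s,
      (S.olt g2 g3 x0 w u1 t).2 = z ∧ (S.olt g2 g3 x0 w u1 t).1 = x}

end Red3


namespace Red3

variable (S : Red3) (g2 : S.St2) (g3 : S.St3)

/-- consistency of a (z,u)-history with a subsystem-1 strategy -/
def Cons (g1 : S.St1) {t : ℕ} (z : ∀ ℓ : Fin t, S.Z1 (ℓ.1+1))
    (u : ∀ ℓ : Fin t, S.U1 ℓ.1) : Prop :=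
  ∀ ℓ : Fin t, u ℓ = g1 ℓ.1 (hrestr (β := fun n => S.Z1 (n+1)) z ℓ.1 ℓ.2.le)
    (hrestr (β := S.U1) u ℓ.1 ℓ.2.le)

lemma olt_prefix (x0 : S.X 0) (w : ∀ s, S.W s) (u1 : ∀ s, S.U1 s) :
    ∀ (t s : ℕ) (hs : s ≤ t),
      hrestr (β := fun n => S.Z1 (n+1)) (S.olt g2 g3 x0 w u1 t).2 s hs =
        (S.olt g2 g3 x0 w u1 s).2 := by
  intro t
  induction t with
  | zero => intro s hs; interval_cases s; simp
  | succ t ih =>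
    intro s hs
    rcases lt_or_eq_of_le hs with h | h
    · have hs' : s ≤ t := Nat.lt_succ_iff.1 h
      have : (S.olt g2 g3 x0 w u1 (t+1)).2 =
          Fin.snoc (α := fun ℓ : Fin (t+1) => S.Z1 (ℓ.1+1)) (S.olt g2 g3 x0 w u1 t).2 _ := rfl
      rw [this, hrestr_snoc _ _ _ hs']
      exact ih s hs'
    · subst h; simp

lemma olt_congr (x0 : S.X 0) {w w' : ∀ s, S.W s} {u1 u1' : ∀ s, S.U1 s} :
    ∀ (t : ℕ), (∀ s < t, w s = w' s) → (∀ s < t, u1 s = u1' s) →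
      S.olt g2 g3 x0 w u1 t = S.olt g2 g3 x0 w' u1' t := by
  intro t
  induction t with
  | zero => intro _ _; rfl
  | succ t ih =>
    intro hw hu
    have h0 : S.olt g2 g3 x0 w u1 t = S.olt g2 g3 x0 w' u1' t :=
      ih (fun s hs => hw s (hs.trans (Nat.lt_succ_self t)))
        (fun s hs => hu s (hs.trans (Nat.lt_succ_self t)))
    show (_, _) = (_, _)
    rw [show S.olt g2 g3 x0 w u1 t = S.olt g2 g3 x0 w' u1' t from h0,
      hw t (Nat.lt_succ_self t), hu t (Nat.lt_succ_self t)]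

/-- the action sequence generated by a closed loop -/
def clAct (g1 : S.St1) (x0 : S.X 0) (w : ∀ s, S.W s) : ∀ s, S.U1 s :=
  fun s => g1 s (S.clt g2 g3 g1 x0 w s).2.1 (S.clt g2 g3 g1 x0 w s).2.2

lemma clt_olt (g1 : S.St1) (x0 : S.X 0) (w : ∀ s, S.W s) :
    ∀ t : ℕ, (S.olt g2 g3 x0 w (S.clAct g2 g3 g1 x0 w) t).1 = (S.clt g2 g3 g1 x0 w t).1 ∧
      (S.olt g2 g3 x0 w (S.clAct g2 g3 g1 x0 w) t).2 = (S.clt g2 g3 g1 x0 w t).2.1 ∧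
      (S.clt g2 g3 g1 x0 w t).2.2 = fun ℓ : Fin t => S.clAct g2 g3 g1 x0 w ℓ.1 := by
  intro t
  induction t with
  | zero =>
    refine ⟨rfl, rfl, ?_⟩
    funext ℓ; exact ℓ.elim0
  | succ t ih =>
    obtain ⟨h1, h2, h3⟩ := ih
    have hact : S.clAct g2 g3 g1 x0 w t =
        g1 t (S.clt g2 g3 g1 x0 w t).2.1 (S.clt g2 g3 g1 x0 w t).2.2 := rfl
    refine ⟨?_, ?_, ?_⟩
    · show S.f t (S.olt g2 g3 x0 w _ t).1 _ _ _ (w t) = S.f t (S.clt g2 g3 g1 x0 w t).1 _ _ _ (w t)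
      rw [h1, h2, hact]
    · show Fin.snoc (α := fun ℓ : Fin (t+1) => S.Z1 (ℓ.1+1)) (S.olt g2 g3 x0 w _ t).2 _ =
        Fin.snoc (α := fun ℓ : Fin (t+1) => S.Z1 (ℓ.1+1)) (S.clt g2 g3 g1 x0 w t).2.1 _
      rw [h1, h2, hact]
    · show Fin.snoc (α := fun ℓ : Fin (t+1) => S.U1 ℓ.1) (S.clt g2 g3 g1 x0 w t).2.2
        (g1 t (S.clt g2 g3 g1 x0 w t).2.1 (S.clt g2 g3 g1 x0 w t).2.2) = _
      funext ℓ
      rcases Nat.lt_succ_iff_lt_or_eq.1 ℓ.2 with h | h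
      · have hℓ : ℓ = Fin.castSucc ⟨ℓ.1, h⟩ := Fin.ext rfl
        rw [hℓ, Fin.snoc_castSucc, h3]
        rfl
      · have hℓ : ℓ = Fin.last t := Fin.ext h
        rw [hℓ, Fin.snoc_last]
        exact hact.symm

/-- the state of a closed loop belongs to the information state of its own history -/
lemma clt_mem_Pi1 (g1 : S.St1) (x0 : S.X 0) (hx0 : x0 ∈ S.X0) (w : ∀ s, S.W s) (t : ℕ) :
    (S.clt g2 g3 g1 x0 w t).1 ∈
      S.Pi1 g2 g3 t (S.clt g2 g3 g1 x0 w t).2.1 (S.clt g2 g3 g1 x0 w t).2.2 := by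
  obtain ⟨h1, h2, h3⟩ := S.clt_olt g2 g3 g1 x0 w t
  exact ⟨S.clAct g2 g3 g1 x0 w, fun ℓ => by rw [h3], x0, hx0, w, h2, h1⟩


lemma mem_Pi1_snoc {t : ℕ} (z : ∀ ℓ : Fin t, S.Z1 (ℓ.1+1)) (u : ∀ ℓ : Fin t, S.U1 ℓ.1)
    (a : S.Z1 (t+1)) (b : S.U1 t) (x' : S.X (t+1)) :
    x' ∈ S.Pi1 g2 g3 (t+1) (Fin.snoc (α := fun ℓ : Fin (t+1) => S.Z1 (ℓ.1+1)) z a)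
      (Fin.snoc (α := fun ℓ : Fin (t+1) => S.U1 ℓ.1) u b) ↔
    ∃ x ∈ S.Pi1 g2 g3 t z u, ∃ wt : S.W t,
      S.h t x b (g2 t (fun ℓ => S.rho2 (ℓ.1+1) (z ℓ)))
        (g3 t (fun ℓ => S.rho3 (ℓ.1+1) (S.rho2 (ℓ.1+1) (z ℓ)))) = a ∧
      S.f t x b (g2 t (fun ℓ => S.rho2 (ℓ.1+1) (z ℓ)))
        (g3 t (fun ℓ => S.rho3 (ℓ.1+1) (S.rho2 (ℓ.1+1) (z ℓ)))) wt = x' := by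
  constructor
  · rintro ⟨u1, hu1, x0, hx0, w, hz, hx⟩
    have key2 : (S.olt g2 g3 x0 w u1 (t+1)).2 =
        Fin.snoc (α := fun ℓ : Fin (t+1) => S.Z1 (ℓ.1+1)) (S.olt g2 g3 x0 w u1 t).2
          (S.h t (S.olt g2 g3 x0 w u1 t).1 (u1 t)
            (g2 t (fun ℓ => S.rho2 (ℓ.1+1) ((S.olt g2 g3 x0 w u1 t).2 ℓ)))
            (g3 t (fun ℓ => S.rho3 (ℓ.1+1) (S.rho2 (ℓ.1+1) ((S.olt g2 g3 x0 w u1 t).2 ℓ))))) :=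
      rfl
    rw [key2] at hz
    obtain ⟨hz1, hz2⟩ := hsnoc_inj (β := fun n => S.Z1 (n+1)) hz
    have hu1t : u1 t = b := by
      have := hu1 ⟨t, Nat.lt_succ_self t⟩
      rwa [hsnoc_last (β := S.U1) u b] at this
    refine ⟨(S.olt g2 g3 x0 w u1 t).1, ?_, w t, ?_, ?_⟩
    · refine ⟨u1, ?_, x0, hx0, w, hz1, rfl⟩
      intro ℓ
      have := hu1 ⟨ℓ.1, ℓ.2.trans (Nat.lt_succ_self t)⟩
      rwa [hsnoc_lt (β := S.U1) u b ℓ.1 ℓ.2] at this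
    · rw [← hz2, hz1, hu1t]
    · rw [← hx, ← hz1, ← hu1t]
      rfl
  · rintro ⟨x, ⟨u1, hu1, x0, hx0, w, hz, hx⟩, wt, ha, hf⟩
    set u1' : ∀ s, S.U1 s := Function.update u1 t b with hu1'def
    set w' : ∀ s, S.W s := Function.update w t wt with hw'def
    have heq : S.olt g2 g3 x0 w u1 t = S.olt g2 g3 x0 w' u1' t :=
      S.olt_congr g2 g3 x0 t
        (fun s hs => (Function.update_of_ne (Nat.ne_of_lt hs) wt w).symm)
        (fun s hs => (Function.update_of_ne (Nat.ne_of_lt hs) b u1).symm)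
    have hb : u1' t = b := by rw [hu1'def]; exact Function.update_self t b u1
    have hwt : w' t = wt := by rw [hw'def]; exact Function.update_self t wt w
    refine ⟨u1', ?_, x0, hx0, w', ?_, ?_⟩
    · intro ℓ
      rcases Nat.lt_succ_iff_lt_or_eq.1 ℓ.2 with h | h
      · have hℓ : ℓ = Fin.castSucc ⟨ℓ.1, h⟩ := Fin.ext rfl
        rw [hℓ, Fin.snoc_castSucc]
        show u1' ℓ.1 = u ⟨ℓ.1, h⟩
        rw [hu1'def, Function.update_of_ne (Nat.ne_of_lt h) b u1]
        exact hu1 ⟨ℓ.1, h⟩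
      · have hℓ : ℓ = Fin.last t := Fin.ext h
        rw [hℓ, Fin.snoc_last]
        exact hb
    · show Fin.snoc (α := fun ℓ : Fin (t+1) => S.Z1 (ℓ.1+1)) (S.olt g2 g3 x0 w' u1' t).2
        (S.h t (S.olt g2 g3 x0 w' u1' t).1 (u1' t)
          (g2 t (fun ℓ => S.rho2 (ℓ.1+1) ((S.olt g2 g3 x0 w' u1' t).2 ℓ)))
          (g3 t (fun ℓ => S.rho3 (ℓ.1+1) (S.rho2 (ℓ.1+1)
            ((S.olt g2 g3 x0 w' u1' t).2 ℓ))))) = _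
      rw [← heq, hz, hx, hb, ha]
    · show S.f t (S.olt g2 g3 x0 w' u1' t).1 (u1' t)
        (g2 t (fun ℓ => S.rho2 (ℓ.1+1) ((S.olt g2 g3 x0 w' u1' t).2 ℓ)))
        (g3 t (fun ℓ => S.rho3 (ℓ.1+1) (S.rho2 (ℓ.1+1) ((S.olt g2 g3 x0 w' u1' t).2 ℓ))))
        (w' t) = x'
      rw [← heq, hz, hx, hb, hwt, hf]

/-- any point of the information state of a `g1`-consistent history is the terminal
state of some closed-loop realization under `g1` -/
lemma cons_realizable (g1 : S.St1) {t : ℕ} {z : ∀ ℓ : Fin t, S.Z1 (ℓ.1+1)}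
    {u : ∀ ℓ : Fin t, S.U1 ℓ.1} (hc : S.Cons g1 z u) {x : S.X t}
    (hx : x ∈ S.Pi1 g2 g3 t z u) :
    ∃ x0 ∈ S.X0, ∃ w : ∀ s, S.W s, (S.clt g2 g3 g1 x0 w t).1 = x := by
  obtain ⟨u1, hu1, x0, hx0, w, hz, hxx⟩ := hx
  suffices hcl : ∀ s : ℕ, (hs : s ≤ t) →
      S.clt g2 g3 g1 x0 w s = ((S.olt g2 g3 x0 w u1 s).1, (S.olt g2 g3 x0 w u1 s).2,
        fun ℓ : Fin s => u1 ℓ.1) by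
    refine ⟨x0, hx0, w, ?_⟩
    rw [hcl t le_rfl]
    exact hxx
  intro s
  induction s with
  | zero =>
    intro _
    refine Prod.ext rfl (Prod.ext rfl ?_)
    funext ℓ; exact ℓ.elim0
  | succ s ih =>
    intro hs
    have hst : s < t := hs
    have ihs := ih hst.le
    have hact : g1 s (S.clt g2 g3 g1 x0 w s).2.1 (S.clt g2 g3 g1 x0 w s).2.2 = u1 s := by
      rw [ihs]
      show g1 s (S.olt g2 g3 x0 w u1 s).2 (fun ℓ : Fin s => u1 ℓ.1) = u1 s
      have hcs := hc ⟨s, hst⟩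
      have hz' : hrestr (β := fun n => S.Z1 (n+1)) z s hst.le = (S.olt g2 g3 x0 w u1 s).2 := by
        rw [← hz]
        exact S.olt_prefix g2 g3 x0 w u1 t s hst.le
      have hu' : hrestr (β := S.U1) u s hst.le = fun ℓ : Fin s => u1 ℓ.1 := by
        funext ℓ
        exact (hu1 ⟨ℓ.1, ℓ.2.trans_le hst.le⟩).symm
      rw [← hz', ← hu']
      exact hcs.symm.trans (hu1 ⟨s, hst⟩).symm
    show (_, _, _) = _
    rw [ihs] at hact
    show (S.f s (S.clt g2 g3 g1 x0 w s).1 _ _ _ (w s),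
      Fin.snoc (α := fun ℓ : Fin (s+1) => S.Z1 (ℓ.1+1)) (S.clt g2 g3 g1 x0 w s).2.1 _,
      Fin.snoc (α := fun ℓ : Fin (s+1) => S.U1 ℓ.1) (S.clt g2 g3 g1 x0 w s).2.2
        (g1 s (S.clt g2 g3 g1 x0 w s).2.1 (S.clt g2 g3 g1 x0 w s).2.2)) = _
    rw [ihs]
    simp only [hact]
    refine Prod.ext rfl (Prod.ext rfl ?_)
    show Fin.snoc (α := fun ℓ : Fin (s+1) => S.U1 ℓ.1) (fun ℓ : Fin s => u1 ℓ.1) (u1 s) = _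
    funext ℓ
    rcases Nat.lt_succ_iff_lt_or_eq.1 ℓ.2 with h | h
    · have hℓ : ℓ = Fin.castSucc ⟨ℓ.1, h⟩ := Fin.ext rfl
      rw [hℓ, Fin.snoc_castSucc]
      rfl
    · have hℓ : ℓ = Fin.last s := Fin.ext h
      rw [hℓ, Fin.snoc_last]
      rfl


lemma Cons_snoc (g1 : S.St1) {t : ℕ} {z : ∀ ℓ : Fin t, S.Z1 (ℓ.1+1)}
    {u : ∀ ℓ : Fin t, S.U1 ℓ.1} (hc : S.Cons g1 z u) (a : S.Z1 (t+1)) {b : S.U1 t}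
    (hb : b = g1 t z u) :
    S.Cons g1 (Fin.snoc (α := fun ℓ : Fin (t+1) => S.Z1 (ℓ.1+1)) z a)
      (Fin.snoc (α := fun ℓ : Fin (t+1) => S.U1 ℓ.1) u b) := by
  intro ℓ
  rcases Nat.lt_succ_iff_lt_or_eq.1 ℓ.2 with hlt | heqt
  · have e1 : hrestr (β := fun n => S.Z1 (n+1))
        (Fin.snoc (α := fun ℓ : Fin (t+1) => S.Z1 (ℓ.1+1)) z a) ℓ.1 ℓ.2.le =
        hrestr (β := fun n => S.Z1 (n+1)) z ℓ.1 hlt.le :=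
      hrestr_snoc (β := fun n => S.Z1 (n+1)) z a ℓ.1 hlt.le ℓ.2.le
    have e2 : hrestr (β := S.U1)
        (Fin.snoc (α := fun ℓ : Fin (t+1) => S.U1 ℓ.1) u b) ℓ.1 ℓ.2.le =
        hrestr (β := S.U1) u ℓ.1 hlt.le :=
      hrestr_snoc (β := S.U1) u b ℓ.1 hlt.le ℓ.2.le
    have e3 : Fin.snoc (α := fun ℓ : Fin (t+1) => S.U1 ℓ.1) u b ℓ = u ⟨ℓ.1, hlt⟩ :=
      hsnoc_lt (β := S.U1) u b ℓ.1 hlt ℓ.2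
    rw [e3, e1, e2]
    exact hc ⟨ℓ.1, hlt⟩
  · have hℓ : ℓ = Fin.last t := Fin.ext heqt
    subst hℓ
    have e3 : Fin.snoc (α := fun ℓ : Fin (t+1) => S.U1 ℓ.1) u b (Fin.last t) = b :=
      Fin.snoc_last (α := fun ℓ : Fin (t+1) => S.U1 ℓ.1) b u
    rw [e3]
    simp only [Fin.val_last]
    rw [hrestr_snoc (β := fun n => S.Z1 (n+1)) z a t le_rfl (Nat.le_succ t),
      hrestr_snoc (β := S.U1) u b t le_rfl (Nat.le_succ t), hrestr_self, hrestr_self]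
    exact hb

/-- the structured decision rule built from `g1` -/
noncomputable def phi (g1 : S.St1) (t : ℕ) (P : Set (S.X t))
    (z2 : ∀ ℓ : Fin t, S.Z2 (ℓ.1+1)) : S.U1 t := by
  classical
  exact if h : ∃ p : (∀ ℓ : Fin t, S.Z1 (ℓ.1+1)) × (∀ ℓ : Fin t, S.U1 ℓ.1),
      S.Cons g1 p.1 p.2 ∧ S.Pi1 g2 g3 t p.1 p.2 = P ∧
        (fun ℓ : Fin t => S.rho2 (ℓ.1+1) (p.1 ℓ)) = z2
  then g1 t h.choose.1 h.choose.2
  else (S.U1ne t).some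

/-- the structured strategy built from `g1` -/
noncomputable def str1 (g1 : S.St1) : S.St1 :=
  fun t z u => S.phi g2 g3 g1 t (S.Pi1 g2 g3 t z u) (fun ℓ => S.rho2 (ℓ.1+1) (z ℓ))

/-- the invariant: along any closed loop of the structured strategy, the visited
(information state, z²-history) pair also arises from a `g1`-consistent history -/
lemma good (g1 : S.St1) (x0 : S.X 0) (w : ∀ s, S.W s) :
    ∀ t : ℕ, ∃ p : (∀ ℓ : Fin t, S.Z1 (ℓ.1+1)) × (∀ ℓ : Fin t, S.U1 ℓ.1),
      S.Cons g1 p.1 p.2 ∧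
      S.Pi1 g2 g3 t p.1 p.2 = S.Pi1 g2 g3 t (S.clt g2 g3 (S.str1 g2 g3 g1) x0 w t).2.1
        (S.clt g2 g3 (S.str1 g2 g3 g1) x0 w t).2.2 ∧
      (fun ℓ : Fin t => S.rho2 (ℓ.1+1) (p.1 ℓ)) =
        fun ℓ : Fin t => S.rho2 (ℓ.1+1) ((S.clt g2 g3 (S.str1 g2 g3 g1) x0 w t).2.1 ℓ) := by
  intro t
  induction t with
  | zero =>
    refine ⟨((S.clt g2 g3 (S.str1 g2 g3 g1) x0 w 0).2.1,
      (S.clt g2 g3 (S.str1 g2 g3 g1) x0 w 0).2.2), fun ℓ => ℓ.elim0, rfl, rfl⟩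
  | succ t ih =>
    set G := S.str1 g2 g3 g1 with hG
    set z := (S.clt g2 g3 G x0 w t).2.1 with hzdef
    set u := (S.clt g2 g3 G x0 w t).2.2 with hudef
    set x := (S.clt g2 g3 G x0 w t).1 with hxdef
    set b := G t z u with hbdef
    set a := S.h t x b (g2 t (fun ℓ => S.rho2 (ℓ.1+1) (z ℓ)))
      (g3 t (fun ℓ => S.rho3 (ℓ.1+1) (S.rho2 (ℓ.1+1) (z ℓ)))) with hadef
    have hcl1 : (S.clt g2 g3 G x0 w (t+1)).2.1 =
        Fin.snoc (α := fun ℓ : Fin (t+1) => S.Z1 (ℓ.1+1)) z a := rfl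
    have hcl2 : (S.clt g2 g3 G x0 w (t+1)).2.2 =
        Fin.snoc (α := fun ℓ : Fin (t+1) => S.U1 ℓ.1) u b := rfl
    obtain ⟨q, hq⟩ := ih
    have h : ∃ p : (∀ ℓ : Fin t, S.Z1 (ℓ.1+1)) × (∀ ℓ : Fin t, S.U1 ℓ.1),
        S.Cons g1 p.1 p.2 ∧ S.Pi1 g2 g3 t p.1 p.2 = S.Pi1 g2 g3 t z u ∧
          (fun ℓ : Fin t => S.rho2 (ℓ.1+1) (p.1 ℓ)) =
            fun ℓ : Fin t => S.rho2 (ℓ.1+1) (z ℓ) := ⟨q, hq⟩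
    obtain ⟨hcons, hP, hrho⟩ := h.choose_spec
    have hrho3 : (fun ℓ : Fin t => S.rho3 (ℓ.1+1) (S.rho2 (ℓ.1+1) (h.choose.1 ℓ))) =
        fun ℓ : Fin t => S.rho3 (ℓ.1+1) (S.rho2 (ℓ.1+1) (z ℓ)) := by
      funext ℓ
      exact congrArg _ (congrFun hrho ℓ)
    have hb : b = g1 t h.choose.1 h.choose.2 := by
      rw [hbdef, hG]
      show S.phi g2 g3 g1 t (S.Pi1 g2 g3 t z u) (fun ℓ => S.rho2 (ℓ.1+1) (z ℓ)) = _
      exact dif_pos h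
    refine ⟨(Fin.snoc (α := fun ℓ : Fin (t+1) => S.Z1 (ℓ.1+1)) h.choose.1 a,
      Fin.snoc (α := fun ℓ : Fin (t+1) => S.U1 ℓ.1) h.choose.2 b), ?_, ?_, ?_⟩
    · exact S.Cons_snoc g1 hcons a hb
    · dsimp only
      rw [hcl1, hcl2]
      ext x'
      rw [S.mem_Pi1_snoc g2 g3, S.mem_Pi1_snoc g2 g3, hP, hrho, hrho3]
    · dsimp only
      rw [hcl1]
      funext ℓ
      rcases Nat.lt_succ_iff_lt_or_eq.1 ℓ.2 with hlt | heqt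
      · have hℓ : ℓ = Fin.castSucc ⟨ℓ.1, hlt⟩ := Fin.ext rfl
        rw [hℓ, Fin.snoc_castSucc, Fin.snoc_castSucc]
        exact congrFun hrho ⟨ℓ.1, hlt⟩
      · have hℓ : ℓ = Fin.last t := Fin.ext heqt
        rw [hℓ, Fin.snoc_last, Fin.snoc_last]

lemma J1_set_nonempty (g1 : S.St1) :
    {r | ∃ x0 ∈ S.X0, ∃ w : ∀ s, S.W s, r = S.d (S.clt g2 g3 g1 x0 w S.T).1}.Nonempty := by
  obtain ⟨x0, hx0⟩ := S.X0ne
  exact ⟨_, x0, hx0, fun s => (S.Wne s).some, rfl⟩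

lemma J1_set_finite (g1 : S.St1) :
    {r | ∃ x0 ∈ S.X0, ∃ w : ∀ s, S.W s, r = S.d (S.clt g2 g3 g1 x0 w S.T).1}.Finite := by
  haveI := S.Xfin S.T
  refine (Set.finite_range S.d).subset ?_
  rintro r ⟨x0, hx0, w, rfl⟩
  exact ⟨_, rfl⟩

lemma le_J1 (g1 : S.St1) {x0 : S.X 0} (hx0 : x0 ∈ S.X0) (w : ∀ s, S.W s) :
    S.d ((S.clt g2 g3 g1 x0 w S.T).1) ≤ S.J1 g2 g3 g1 :=
  le_csSup (S.J1_set_finite g2 g3 g1).bddAbove ⟨x0, hx0, w, rfl⟩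

lemma J1_le (g1 : S.St1) {r : ℝ}
    (hub : ∀ x0 ∈ S.X0, ∀ w : ∀ s, S.W s, S.d ((S.clt g2 g3 g1 x0 w S.T).1) ≤ r) :
    S.J1 g2 g3 g1 ≤ r := by
  refine csSup_le (S.J1_set_nonempty g2 g3 g1) ?_
  rintro s ⟨x0, hx0, w, rfl⟩
  exact hub x0 hx0 w

lemma J1_mem_range (g1 : S.St1) : S.J1 g2 g3 g1 ∈ Set.range S.d := by
  haveI := S.Xfin S.T
  have h := (S.J1_set_nonempty g2 g3 g1).csSup_mem (S.J1_set_finite g2 g3 g1)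
  obtain ⟨x0, hx0, w, hw⟩ := h
  exact ⟨_, hw.symm⟩

/-- key comparison: the structured strategy built from `g1` does at least as well -/
lemma str1_le (g1 : S.St1) : S.J1 g2 g3 (S.str1 g2 g3 g1) ≤ S.J1 g2 g3 g1 := by
  refine S.J1_le g2 g3 _ ?_
  intro x0 hx0 w
  obtain ⟨p, hcons, hP, _⟩ := S.good g2 g3 g1 x0 w S.T
  have hmem := S.clt_mem_Pi1 g2 g3 (S.str1 g2 g3 g1) x0 hx0 w S.T
  rw [← hP] at hmem
  obtain ⟨x0', hx0', w', hterm⟩ := S.cons_realizable g2 g3 g1 hcons hmem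
  calc S.d (S.clt g2 g3 (S.str1 g2 g3 g1) x0 w S.T).1
      = S.d (S.clt g2 g3 g1 x0' w' S.T).1 := by rw [hterm]
    _ ≤ S.J1 g2 g3 g1 := S.le_J1 g2 g3 g1 hx0' w'

end Red3

/-- for fixed `ĝ²`, `ĝ³`, it is without loss of optimality to
restrict subsystem 1 to strategies of the form
`u¹_t = φ_t(Π¹_t(z¹_{1:t}, u¹_{0:t-1}), z²_{1:t})`. -/
theorem stmt5 (S : Red3) (g2 : S.St2) (g3 : S.St3) :
    (sInf {r | ∃ g1 : S.St1, r = S.J1 g2 g3 g1} =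
      sInf {r | ∃ g1 : S.St1,
        (∃ φ : ∀ t, Set (S.X t) → (∀ ℓ : Fin t, S.Z2 (ℓ.1+1)) → S.U1 t,
          ∀ (t : ℕ) (z : ∀ ℓ : Fin t, S.Z1 (ℓ.1+1)) (u : ∀ ℓ : Fin t, S.U1 ℓ.1),
            g1 t z u = φ t (S.Pi1 g2 g3 t z u) (fun ℓ => S.rho2 (ℓ.1+1) (z ℓ))) ∧
        r = S.J1 g2 g3 g1}) ∧
    ∀ g1 : S.St1, ∃ g1' : S.St1,
      (∃ φ : ∀ t, Set (S.X t) → (∀ ℓ : Fin t, S.Z2 (ℓ.1+1)) → S.U1 t,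
        ∀ (t : ℕ) (z : ∀ ℓ : Fin t, S.Z1 (ℓ.1+1)) (u : ∀ ℓ : Fin t, S.U1 ℓ.1),
          g1' t z u = φ t (S.Pi1 g2 g3 t z u) (fun ℓ => S.rho2 (ℓ.1+1) (z ℓ))) ∧
      S.J1 g2 g3 g1' ≤ S.J1 g2 g3 g1 := by
  classical
  have part2 : ∀ g1 : S.St1, ∃ g1' : S.St1,
      (∃ φ : ∀ t, Set (S.X t) → (∀ ℓ : Fin t, S.Z2 (ℓ.1+1)) → S.U1 t,
        ∀ (t : ℕ) (z : ∀ ℓ : Fin t, S.Z1 (ℓ.1+1)) (u : ∀ ℓ : Fin t, S.U1 ℓ.1),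
          g1' t z u = φ t (S.Pi1 g2 g3 t z u) (fun ℓ => S.rho2 (ℓ.1+1) (z ℓ))) ∧
      S.J1 g2 g3 g1' ≤ S.J1 g2 g3 g1 :=
    fun g1 => ⟨S.str1 g2 g3 g1, ⟨S.phi g2 g3 g1, fun t z u => rfl⟩, S.str1_le g2 g3 g1⟩
  refine ⟨?_, part2⟩
  haveI := S.Xfin S.T
  set A := {r | ∃ g1 : S.St1, r = S.J1 g2 g3 g1} with hAdef
  set B := {r | ∃ g1 : S.St1,
    (∃ φ : ∀ t, Set (S.X t) → (∀ ℓ : Fin t, S.Z2 (ℓ.1+1)) → S.U1 t,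
      ∀ (t : ℕ) (z : ∀ ℓ : Fin t, S.Z1 (ℓ.1+1)) (u : ∀ ℓ : Fin t, S.U1 ℓ.1),
        g1 t z u = φ t (S.Pi1 g2 g3 t z u) (fun ℓ => S.rho2 (ℓ.1+1) (z ℓ))) ∧
    r = S.J1 g2 g3 g1} with hBdef
  have hBA : B ⊆ A := by
    rintro r ⟨g1, -, rfl⟩
    exact ⟨g1, rfl⟩
  have hAsub : A ⊆ Set.range S.d := by
    rintro r ⟨g1, rfl⟩
    exact S.J1_mem_range g2 g3 g1
  have hAfin : A.Finite := (Set.finite_range S.d).subset hAsub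
  have hAne : A.Nonempty := ⟨_, fun t _ _ => (S.U1ne t).some, rfl⟩
  obtain ⟨g0', hstr0, -⟩ := part2 (fun t _ _ => (S.U1ne t).some)
  have hBne : B.Nonempty := ⟨_, g0', hstr0, rfl⟩
  have hBfin : B.Finite := hAfin.subset hBA
  refine le_antisymm (csInf_le_csInf hAfin.bddBelow hBne hBA) ?_
  obtain ⟨g1m, hg1m⟩ := hAne.csInf_mem hAfin
  obtain ⟨g1', hstr, hle⟩ := part2 g1m
  have hmemB : S.J1 g2 g3 g1' ∈ B := ⟨g1', hstr, rfl⟩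
  rw [hg1m]
  exact (csInf_le hBfin.bddBelow hmemB).trans hle
end

section
/- Fix partial strategies ĝ² and ĝ³, and let f̃¹_t be the strategy-independent information-state update maps, so that along every closed loop Π¹_{t+1} = f̃¹_t(Π¹_t, (u¹_t, u²_t, u³_t), z¹_{t+1}) with Π¹_0 = X̂₀. Then: (i) for every prescription strategy ψ (assigning to each t a prescription Γ_t = ψ_t(z²_{1:t}) : 2^{𝒳̂_t} → 𝒰¹_t, with u¹_t = Γ_t(Π¹_t)), the subsystem-1 strategy ĝ¹ defined by ĝ¹_t(z¹_{1:t}) := ψ_t(z²_{1:t})(Π¹_t) generates, for every realization, the identical closed-loop trajectory, so the two have equal worst-case cost; and (ii) conversely, for every subsystem-1 strategy of the structured form u¹_t = φ_t(Π¹_t, z²_{1:t}), the prescription strategy ψ_t(z²_{1:t}) := φ_t(·, z²_{1:t}) generates identical closed-loop trajectories and equal worst-case cost. Hence it is equivalent to optimize over prescription strategies of subsystem 2 or over structured partial strategies of subsystem 1. -/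
namespace Red3

variable (S : Red3)

/-- The strategy-independent subsystem-1 information-state update `f̃¹_t`. -/
def ftil1 (t : ℕ) (P : Set (S.X t)) (u : S.U1 t × S.U2 t × S.U3 t)
    (z : S.Z1 (t+1)) : Set (S.X (t+1)) :=
  {x' | ∃ x ∈ P, S.h t x u.1 u.2.1 u.2.2 = z ∧
    ∃ w : S.W t, x' = S.f t x u.1 u.2.1 u.2.2 w}

/-- A prescription strategy of subsystem 2 for subsystem 1:
`Γ_t = ψ_t(z²_{1:t}) : 2^{𝒳̂_t} → 𝒰¹_t`. -/
def Psi := ∀ t : ℕ, (∀ ℓ : Fin t, S.Z2 (ℓ.1+1)) → Set (S.X t) → S.U1 t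

/-- A structured subsystem-1 strategy datum: `u¹_t = φ_t(Π¹_t, z²_{1:t})`. -/
def Phi := ∀ t : ℕ, Set (S.X t) → (∀ ℓ : Fin t, S.Z2 (ℓ.1+1)) → S.U1 t

/-- The information state `Π¹_t(z¹_{1:t})` obtained from the strategy-independent
recursion `Π¹_{ℓ+1} = f̃¹_ℓ(Π¹_ℓ, (u¹_ℓ,u²_ℓ,u³_ℓ), z¹_{ℓ+1})`, `Π¹_0 = X̂₀`,
along the closed loop generated by the prescription strategy `ψ` (and `g2`, `g3`). -/
def PiRec (g2 : S.St2) (g3 : S.St3) (ψ : S.Psi) :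
    ∀ t : ℕ, (∀ ℓ : Fin t, S.Z1 (ℓ.1+1)) → Set (S.X t)
  | 0, _ => S.X0
  | t+1, z =>
    let zp := fun ℓ : Fin t => z ℓ.castSucc
    let P := PiRec g2 g3 ψ t zp
    let u1 := ψ t (fun ℓ => S.rho2 (ℓ.1+1) (zp ℓ)) P
    let u2 := g2 t (fun ℓ => S.rho2 (ℓ.1+1) (zp ℓ))
    let u3 := g3 t (fun ℓ => S.rho3 (ℓ.1+1) (S.rho2 (ℓ.1+1) (zp ℓ)))
    S.ftil1 t P (u1, u2, u3) (z (Fin.last t))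

/-- The subsystem-1 strategy induced by a prescription strategy `ψ`:
`ĝ¹_t(z¹_{1:t}) := ψ_t(z²_{1:t})(Π¹_t)`. -/
def g1ofPsi (g2 : S.St2) (g3 : S.St3) (ψ : S.Psi) : S.St1 :=
  fun t z _ => ψ t (fun ℓ => S.rho2 (ℓ.1+1) (z ℓ)) (S.PiRec g2 g3 ψ t z)

/-- The prescription strategy induced by a structured datum `φ`:
`ψ_t(z²_{1:t}) := φ_t(·, z²_{1:t})`. -/
def psiOfPhi (φ : S.Phi) : S.Psi := fun t c P => φ t P c

/-- Closed-loop trajectory of the prescription system: it carries the state,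
the information state `Π¹_t` and the `z¹`-observation history. -/
def pclt (g2 : S.St2) (g3 : S.St3) (ψ : S.Psi) (x0 : S.X 0) (w : ∀ t, S.W t) :
    ∀ t : ℕ, S.X t × Set (S.X t) × (∀ ℓ : Fin t, S.Z1 (ℓ.1+1))
  | 0 => (x0, S.X0, fun i => i.elim0)
  | t+1 =>
    let p := pclt g2 g3 ψ x0 w t
    let u1 := ψ t (fun ℓ => S.rho2 (ℓ.1+1) (p.2.2 ℓ)) p.2.1
    let u2 := g2 t (fun ℓ => S.rho2 (ℓ.1+1) (p.2.2 ℓ))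
    let u3 := g3 t (fun ℓ => S.rho3 (ℓ.1+1) (S.rho2 (ℓ.1+1) (p.2.2 ℓ)))
    let z1 := S.h t p.1 u1 u2 u3
    (S.f t p.1 u1 u2 u3 (w t),
     S.ftil1 t p.2.1 (u1, u2, u3) z1,
     Fin.snoc (α := fun ℓ : Fin (t+1) => S.Z1 (ℓ.1+1)) p.2.2 z1)

/-- Worst-case cost of a prescription strategy. -/
noncomputable def Jpres (g2 : S.St2) (g3 : S.St3) (ψ : S.Psi) : ℝ :=
  sSup {r | ∃ x0 ∈ S.X0, ∃ w : ∀ t, S.W t, r = S.d (S.pclt g2 g3 ψ x0 w S.T).1}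

end Red3

lemma Red3.key (S : Red3) (g2 : S.St2) (g3 : S.St3) (ψ : S.Psi)
    (x0 : S.X 0) (w : ∀ t, S.W t) (t : ℕ) :
    (S.pclt g2 g3 ψ x0 w t).1 = (S.clt g2 g3 (S.g1ofPsi g2 g3 ψ) x0 w t).1 ∧
    (S.pclt g2 g3 ψ x0 w t).2.2 = (S.clt g2 g3 (S.g1ofPsi g2 g3 ψ) x0 w t).2.1 ∧
    (S.pclt g2 g3 ψ x0 w t).2.1 =
      S.PiRec g2 g3 ψ t ((S.pclt g2 g3 ψ x0 w t).2.2) := by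
  induction t with
  | zero => exact ⟨rfl, rfl, rfl⟩
  | succ t ih =>
    obtain ⟨h1, h2, h3⟩ := ih
    have hu1 : S.g1ofPsi g2 g3 ψ t (S.clt g2 g3 (S.g1ofPsi g2 g3 ψ) x0 w t).2.1
        (S.clt g2 g3 (S.g1ofPsi g2 g3 ψ) x0 w t).2.2 =
        ψ t (fun ℓ => S.rho2 (ℓ.1+1) ((S.pclt g2 g3 ψ x0 w t).2.2 ℓ))
          (S.pclt g2 g3 ψ x0 w t).2.1 := by
      rw [Red3.g1ofPsi, ← h2, ← h3]
    refine ⟨?_, ?_, ?_⟩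
    · simp only [Red3.pclt, Red3.clt]
      rw [hu1, h1, h2]
    · simp only [Red3.pclt, Red3.clt]
      rw [hu1, h1, h2]
    · simp only [Red3.pclt, Red3.PiRec, Fin.snoc_castSucc, Fin.snoc_last]
      rw [← h3]

/-- prescription strategies of subsystem 2 and structured partial
strategies of subsystem 1 generate identical closed-loop trajectories and have
equal worst-case costs, hence optimizing over either class is equivalent. -/
theorem stmt6 (S : Red3) (g2 : S.St2) (g3 : S.St3) :
    (∀ ψ : S.Psi,
      (∀ x0 ∈ S.X0, ∀ (w : ∀ t, S.W t) (t : ℕ),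
        (S.pclt g2 g3 ψ x0 w t).1 = (S.clt g2 g3 (S.g1ofPsi g2 g3 ψ) x0 w t).1 ∧
        (S.pclt g2 g3 ψ x0 w t).2.2 = (S.clt g2 g3 (S.g1ofPsi g2 g3 ψ) x0 w t).2.1 ∧
        (S.pclt g2 g3 ψ x0 w t).2.1 =
          S.PiRec g2 g3 ψ t ((S.pclt g2 g3 ψ x0 w t).2.2)) ∧
      S.Jpres g2 g3 ψ = S.J1 g2 g3 (S.g1ofPsi g2 g3 ψ)) ∧
    (∀ φ : S.Phi,
      (∀ x0 ∈ S.X0, ∀ (w : ∀ t, S.W t) (t : ℕ),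
        (S.clt g2 g3 (S.g1ofPsi g2 g3 (S.psiOfPhi φ)) x0 w t).1 =
          (S.pclt g2 g3 (S.psiOfPhi φ) x0 w t).1 ∧
        (S.clt g2 g3 (S.g1ofPsi g2 g3 (S.psiOfPhi φ)) x0 w t).2.1 =
          (S.pclt g2 g3 (S.psiOfPhi φ) x0 w t).2.2) ∧
      S.J1 g2 g3 (S.g1ofPsi g2 g3 (S.psiOfPhi φ)) = S.Jpres g2 g3 (S.psiOfPhi φ)) ∧
    sInf {r | ∃ ψ : S.Psi, r = S.Jpres g2 g3 ψ} =
      sInf {r | ∃ φ : S.Phi, r = S.J1 g2 g3 (S.g1ofPsi g2 g3 (S.psiOfPhi φ))} := by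
  have hJ : ∀ ψ : S.Psi, S.Jpres g2 g3 ψ = S.J1 g2 g3 (S.g1ofPsi g2 g3 ψ) := by
    intro ψ
    unfold Red3.Jpres Red3.J1
    congr 1
    ext r
    constructor
    · rintro ⟨x0, hx0, w, rfl⟩
      exact ⟨x0, hx0, w, by rw [(S.key g2 g3 ψ x0 w S.T).1]⟩
    · rintro ⟨x0, hx0, w, rfl⟩
      exact ⟨x0, hx0, w, by rw [(S.key g2 g3 ψ x0 w S.T).1]⟩
  refine ⟨fun ψ => ⟨fun x0 _ w t => S.key g2 g3 ψ x0 w t, hJ ψ⟩,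
    fun φ => ⟨fun x0 _ w t => ⟨(S.key g2 g3 (S.psiOfPhi φ) x0 w t).1.symm,
      (S.key g2 g3 (S.psiOfPhi φ) x0 w t).2.1.symm⟩, (hJ (S.psiOfPhi φ)).symm⟩, ?_⟩
  congr 1
  ext r
  constructor
  · rintro ⟨ψ, rfl⟩
    exact ⟨fun t P c => ψ t c P, by rw [hJ]; rfl⟩
  · rintro ⟨φ, rfl⟩
    exact ⟨S.psiOfPhi φ, (hJ _).symm⟩
end

section
/- In the equivalent nested three-subsystem system, there exists a partial strategy profile ĝ* = (ĝ*¹, ĝ*², ĝ*³) attaining the minimum of Ĵ over all partial strategy profiles, such that each ĝ*ⁿ depends on its observation history only through its own and all higher-indexed information states: for every t, ĝ*³_t(z³_{1:t}) is a function of Π³_t(z³_{1:t}) alone; ĝ*²_t(z²_{1:t}) is a function of (Π²_t(z²_{1:t}), Π³_t(ρ³(z²_1), …, ρ³(z²_t))) alone; and ĝ*¹_t(z¹_{1:t}) is a function of (Π¹_t(z¹_{1:t}), Π²_t(ρ²(z¹_1), …, ρ²(z¹_t)), Π³_t(ρ³(ρ²(z¹_1)), …, ρ³(ρ²(z¹_t))))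 alone — i.e., any two reachable histories with equal corresponding tuples of information states receive the same action. -/
namespace Red3

variable (S : Red3)

/-- A partial strategy of subsystem 1 in a profile: `u¹_t = ĝ¹_t(z¹_{1:t})`. -/
def G1p := ∀ t : ℕ, (∀ ℓ : Fin t, S.Z1 (ℓ.1+1)) → S.U1 t

/-- Closed-loop trajectory of a partial strategy profile `(g1, g2, g3)`:
state and `z¹`-observation history. -/
def cl (g1 : S.G1p) (g2 : S.St2) (g3 : S.St3) (x0 : S.X 0) (w : ∀ t, S.W t) :
    ∀ t : ℕ, S.X t × (∀ ℓ : Fin t, S.Z1 (ℓ.1+1))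
  | 0 => (x0, fun i => i.elim0)
  | t+1 =>
    let p := cl g1 g2 g3 x0 w t
    let u1 := g1 t p.2
    let u2 := g2 t (fun ℓ => S.rho2 (ℓ.1+1) (p.2 ℓ))
    let u3 := g3 t (fun ℓ => S.rho3 (ℓ.1+1) (S.rho2 (ℓ.1+1) (p.2 ℓ)))
    (S.f t p.1 u1 u2 u3 (w t),
     Fin.snoc (α := fun ℓ : Fin (t+1) => S.Z1 (ℓ.1+1)) p.2 (S.h t p.1 u1 u2 u3))

/-- Worst-case cost of a partial strategy profile. -/
noncomputable def Jp (g1 : S.G1p) (g2 : S.St2) (g3 : S.St3) : ℝ :=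
  sSup {r | ∃ x0 ∈ S.X0, ∃ w : ∀ t, S.W t, r = S.d (S.cl g1 g2 g3 x0 w S.T).1}

/-- The subsystem-1 information state `Π¹_t(z¹_{1:t})` of a profile. -/
def Pi1p (g1 : S.G1p) (g2 : S.St2) (g3 : S.St3) (t : ℕ)
    (z : ∀ ℓ : Fin t, S.Z1 (ℓ.1+1)) : Set (S.X t) :=
  {x | ∃ x0 ∈ S.X0, ∃ w : ∀ s, S.W s,
    (S.cl g1 g2 g3 x0 w t).2 = z ∧ (S.cl g1 g2 g3 x0 w t).1 = x}

/-- The subsystem-2 information state `Π²_t(z²_{1:t})` of a profile. -/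
def Pi2p (g1 : S.G1p) (g2 : S.St2) (g3 : S.St3) (t : ℕ)
    (z2 : ∀ ℓ : Fin t, S.Z2 (ℓ.1+1)) : Set (S.X t × Set (S.X t)) :=
  {q | ∃ x0 ∈ S.X0, ∃ w : ∀ s, S.W s,
    (fun ℓ : Fin t => S.rho2 (ℓ.1+1) ((S.cl g1 g2 g3 x0 w t).2 ℓ)) = z2 ∧
    q = ((S.cl g1 g2 g3 x0 w t).1,
         S.Pi1p g1 g2 g3 t ((S.cl g1 g2 g3 x0 w t).2))}

/-- The subsystem-3 information state `Π³_t(z³_{1:t})` of a profile. -/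
def Pi3p (g1 : S.G1p) (g2 : S.St2) (g3 : S.St3) (t : ℕ)
    (z3 : ∀ ℓ : Fin t, S.Z3 (ℓ.1+1)) :
    Set (S.X t × Set (S.X t) × Set (S.X t × Set (S.X t))) :=
  {q | ∃ x0 ∈ S.X0, ∃ w : ∀ s, S.W s,
    (fun ℓ : Fin t => S.rho3 (ℓ.1+1) (S.rho2 (ℓ.1+1) ((S.cl g1 g2 g3 x0 w t).2 ℓ))) = z3 ∧
    q = ((S.cl g1 g2 g3 x0 w t).1,
         S.Pi1p g1 g2 g3 t ((S.cl g1 g2 g3 x0 w t).2),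
         S.Pi2p g1 g2 g3 t
           (fun ℓ => S.rho2 (ℓ.1+1) ((S.cl g1 g2 g3 x0 w t).2 ℓ)))}

/-- The realized `z¹`-observation history of a profile. -/
def z1h (g1 : S.G1p) (g2 : S.St2) (g3 : S.St3) (x0 : S.X 0) (w : ∀ t, S.W t)
    (t : ℕ) : ∀ ℓ : Fin t, S.Z1 (ℓ.1+1) :=
  (S.cl g1 g2 g3 x0 w t).2

/-- The realized `z²`-observation history of a profile. -/
def z2h (g1 : S.G1p) (g2 : S.St2) (g3 : S.St3) (x0 : S.X 0) (w : ∀ t, S.W t)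
    (t : ℕ) : ∀ ℓ : Fin t, S.Z2 (ℓ.1+1) :=
  fun ℓ => S.rho2 (ℓ.1+1) (S.z1h g1 g2 g3 x0 w t ℓ)

/-- The realized `z³`-observation history of a profile. -/
def z3h (g1 : S.G1p) (g2 : S.St2) (g3 : S.St3) (x0 : S.X 0) (w : ∀ t, S.W t)
    (t : ℕ) : ∀ ℓ : Fin t, S.Z3 (ℓ.1+1) :=
  fun ℓ => S.rho3 (ℓ.1+1) (S.z2h g1 g2 g3 x0 w t ℓ)

end Red3

namespace Red3Aux

/-- Restriction of a length-`s` history to its first `t` entries. -/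
def prefH (β : ℕ → Type) {t s : ℕ} (hts : t ≤ s) (h : ∀ ℓ : Fin s, β ℓ.1) :
    ∀ ℓ : Fin t, β ℓ.1 :=
  fun ℓ => h ⟨ℓ.1, lt_of_lt_of_le ℓ.2 hts⟩

/-- Replace the first `t` entries of a history by `R`. -/
def graftH (β : ℕ → Type) (t : ℕ) (R : ∀ ℓ : Fin t, β ℓ.1) {s : ℕ}
    (h : ∀ ℓ : Fin s, β ℓ.1) : ∀ ℓ : Fin s, β ℓ.1 :=
  fun ℓ => if hl : ℓ.1 < t then R ⟨ℓ.1, hl⟩ else h ℓ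

lemma prefH_rfl (β : ℕ → Type) {t : ℕ} (hts : t ≤ t) (h : ∀ ℓ : Fin t, β ℓ.1) :
    prefH β hts h = h := funext fun ℓ => rfl

lemma graftH_all (β : ℕ → Type) {t : ℕ} (R : ∀ ℓ : Fin t, β ℓ.1)
    (h : ∀ ℓ : Fin t, β ℓ.1) : graftH β t R h = R := by
  funext ℓ
  rw [graftH, dif_pos ℓ.2]

lemma prefH_snoc (β : ℕ → Type) {t s : ℕ} (hts : t ≤ s) (h' : t ≤ s+1)
    (h : ∀ ℓ : Fin s, β ℓ.1) (z : β s) :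
    prefH β h' (Fin.snoc (α := fun ℓ : Fin (s+1) => β ℓ.1) h z) = prefH β hts h := by
  funext ℓ
  exact Fin.snoc_castSucc (α := fun ℓ : Fin (s+1) => β ℓ.1) z h ⟨ℓ.1, lt_of_lt_of_le ℓ.2 hts⟩

lemma graftH_snoc (β : ℕ → Type) {t s : ℕ} (hts : t ≤ s) (R : ∀ ℓ : Fin t, β ℓ.1)
    (h : ∀ ℓ : Fin s, β ℓ.1) (z : β s) :
    graftH β t R (Fin.snoc (α := fun ℓ : Fin (s+1) => β ℓ.1) h z)
      = Fin.snoc (α := fun ℓ : Fin (s+1) => β ℓ.1) (graftH β t R h) z := by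
  funext ℓ
  refine Fin.lastCases ?_ ?_ ℓ
  · have hnlt : ¬ ((Fin.last s).1 < t) := by simp [Fin.last]; omega
    rw [graftH, dif_neg hnlt, Fin.snoc_last, Fin.snoc_last]
  · intro i
    by_cases hi : i.1 < t
    · rw [Fin.snoc_castSucc, graftH, graftH, dif_pos (show (Fin.castSucc i).1 < t from hi),
        dif_pos hi]
      rfl
    · rw [Fin.snoc_castSucc, graftH, graftH, dif_neg (show ¬ (Fin.castSucc i).1 < t from hi),
        dif_neg hi, Fin.snoc_castSucc]

lemma graftH_map (β γ : ℕ → Type) (φ : ∀ n, β n → γ n) (t : ℕ)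
    (R : ∀ ℓ : Fin t, β ℓ.1) {s : ℕ} (h : ∀ ℓ : Fin s, β ℓ.1) :
    (fun ℓ : Fin s => φ ℓ.1 (graftH β t R h ℓ))
      = graftH γ t (fun ℓ => φ ℓ.1 (R ℓ)) (fun ℓ => φ ℓ.1 (h ℓ)) := by
  funext ℓ
  rw [graftH, graftH]
  exact apply_dite (φ ℓ.1) _ _ _

end Red3Aux
namespace Red3

open Red3Aux

variable (S : Red3)

lemma neZ1 (t : ℕ) : Nonempty (S.Z1 (t+1)) :=
  ⟨S.h t (S.Xne t).some (S.U1ne t).some (S.U2ne t).some (S.U3ne t).some⟩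

lemma neZ2 (t : ℕ) : Nonempty (S.Z2 (t+1)) := ⟨S.rho2 (t+1) (S.neZ1 t).some⟩

lemma neZ3 (t : ℕ) : Nonempty (S.Z3 (t+1)) := ⟨S.rho3 (t+1) (S.neZ2 t).some⟩

lemma neW : Nonempty (∀ t, S.W t) := ⟨fun t => (S.Wne t).some⟩

lemma neH1 (t : ℕ) : Nonempty (∀ ℓ : Fin t, S.Z1 (ℓ.1+1)) :=
  ⟨fun ℓ => (S.neZ1 ℓ.1).some⟩

lemma neH2 (t : ℕ) : Nonempty (∀ ℓ : Fin t, S.Z2 (ℓ.1+1)) :=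
  ⟨fun ℓ => (S.neZ2 ℓ.1).some⟩

lemma neH3 (t : ℕ) : Nonempty (∀ ℓ : Fin t, S.Z3 (ℓ.1+1)) :=
  ⟨fun ℓ => (S.neZ3 ℓ.1).some⟩

lemma neG1p : Nonempty S.G1p := ⟨fun t _ => (S.U1ne t).some⟩
lemma neSt2 : Nonempty S.St2 := ⟨fun t _ => (S.U2ne t).some⟩
lemma neSt3 : Nonempty S.St3 := ⟨fun t _ => (S.U3ne t).some⟩

variable {S}

lemma cl_succ (g1 : S.G1p) (g2 : S.St2) (g3 : S.St3) (x0 : S.X 0) (w : ∀ t, S.W t) (n : ℕ) :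
    S.cl g1 g2 g3 x0 w (n+1) =
      (S.f n (S.cl g1 g2 g3 x0 w n).1 (g1 n (S.cl g1 g2 g3 x0 w n).2)
        (g2 n (fun ℓ => S.rho2 (ℓ.1+1) ((S.cl g1 g2 g3 x0 w n).2 ℓ)))
        (g3 n (fun ℓ => S.rho3 (ℓ.1+1) (S.rho2 (ℓ.1+1) ((S.cl g1 g2 g3 x0 w n).2 ℓ)))) (w n),
       Fin.snoc (α := fun ℓ : Fin (n+1) => S.Z1 (ℓ.1+1)) (S.cl g1 g2 g3 x0 w n).2
        (S.h n (S.cl g1 g2 g3 x0 w n).1 (g1 n (S.cl g1 g2 g3 x0 w n).2)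
          (g2 n (fun ℓ => S.rho2 (ℓ.1+1) ((S.cl g1 g2 g3 x0 w n).2 ℓ)))
          (g3 n (fun ℓ => S.rho3 (ℓ.1+1) (S.rho2 (ℓ.1+1) ((S.cl g1 g2 g3 x0 w n).2 ℓ)))))) := rfl

lemma cl_congr_w (g1 : S.G1p) (g2 : S.St2) (g3 : S.St3) (x0 : S.X 0) {w w' : ∀ t, S.W t}
    (n : ℕ) (hw : ∀ r < n, w r = w' r) :
    S.cl g1 g2 g3 x0 w n = S.cl g1 g2 g3 x0 w' n := by
  induction n with
  | zero => rfl
  | succ n ih =>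
    rw [cl_succ, cl_succ, ih (fun r hr => hw r (hr.trans n.lt_succ_self)),
      hw n n.lt_succ_self]

lemma cl_congr_g {g1 g1' : S.G1p} {g2 g2' : S.St2} {g3 g3' : S.St3} (x0 : S.X 0)
    (w : ∀ t, S.W t) (n : ℕ) (h1 : ∀ r < n, g1 r = g1' r) (h2 : ∀ r < n, g2 r = g2' r)
    (h3 : ∀ r < n, g3 r = g3' r) :
    S.cl g1 g2 g3 x0 w n = S.cl g1' g2' g3' x0 w n := by
  induction n with
  | zero => rfl
  | succ n ih =>
    rw [cl_succ, cl_succ,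
      ih (fun r hr => h1 r (hr.trans n.lt_succ_self))
        (fun r hr => h2 r (hr.trans n.lt_succ_self))
        (fun r hr => h3 r (hr.trans n.lt_succ_self)),
      h1 n n.lt_succ_self, h2 n n.lt_succ_self, h3 n n.lt_succ_self]

lemma z1h_pref (g1 : S.G1p) (g2 : S.St2) (g3 : S.St3) (x0 : S.X 0) (w : ∀ t, S.W t)
    {t s : ℕ} (hts : t ≤ s) :
    prefH (fun n => S.Z1 (n+1)) hts (S.cl g1 g2 g3 x0 w s).2 = (S.cl g1 g2 g3 x0 w t).2 := by
  induction s, hts using Nat.le_induction with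
  | base => exact prefH_rfl _ _ _
  | succ s hts ih =>
    have hsn : (S.cl g1 g2 g3 x0 w (s+1)).2
        = Fin.snoc (α := fun ℓ : Fin (s+1) => S.Z1 (ℓ.1+1)) (S.cl g1 g2 g3 x0 w s).2
          (S.h s (S.cl g1 g2 g3 x0 w s).1 (g1 s (S.cl g1 g2 g3 x0 w s).2)
            (g2 s (fun ℓ => S.rho2 (ℓ.1+1) ((S.cl g1 g2 g3 x0 w s).2 ℓ)))
            (g3 s (fun ℓ => S.rho3 (ℓ.1+1) (S.rho2 (ℓ.1+1) ((S.cl g1 g2 g3 x0 w s).2 ℓ))))) := rfl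
    rw [hsn, prefH_snoc (fun n => S.Z1 (n+1)) hts _ _ _, ih]

lemma Pi1p_congr {g1 g1' : S.G1p} {g2 g2' : S.St2} {g3 g3' : S.St3} (t : ℕ)
    (h1 : ∀ r < t, g1 r = g1' r) (h2 : ∀ r < t, g2 r = g2' r) (h3 : ∀ r < t, g3 r = g3' r) :
    S.Pi1p g1 g2 g3 t = S.Pi1p g1' g2' g3' t := by
  have e : ∀ x0 w, S.cl g1 g2 g3 x0 w t = S.cl g1' g2' g3' x0 w t :=
    fun x0 w => cl_congr_g x0 w t h1 h2 h3
  funext z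
  show {x | ∃ x0 ∈ S.X0, ∃ w : ∀ s, S.W s,
      (S.cl g1 g2 g3 x0 w t).2 = z ∧ (S.cl g1 g2 g3 x0 w t).1 = x} = _
  simp only [Pi1p, e]

lemma Pi2p_congr {g1 g1' : S.G1p} {g2 g2' : S.St2} {g3 g3' : S.St3} (t : ℕ)
    (h1 : ∀ r < t, g1 r = g1' r) (h2 : ∀ r < t, g2 r = g2' r) (h3 : ∀ r < t, g3 r = g3' r) :
    S.Pi2p g1 g2 g3 t = S.Pi2p g1' g2' g3' t := by
  have e : ∀ x0 w, S.cl g1 g2 g3 x0 w t = S.cl g1' g2' g3' x0 w t :=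
    fun x0 w => cl_congr_g x0 w t h1 h2 h3
  have e1 := Pi1p_congr t h1 h2 h3
  funext z
  simp only [Pi2p, e, e1]

lemma Pi3p_congr {g1 g1' : S.G1p} {g2 g2' : S.St2} {g3 g3' : S.St3} (t : ℕ)
    (h1 : ∀ r < t, g1 r = g1' r) (h2 : ∀ r < t, g2 r = g2' r) (h3 : ∀ r < t, g3 r = g3' r) :
    S.Pi3p g1 g2 g3 t = S.Pi3p g1' g2' g3' t := by
  have e : ∀ x0 w, S.cl g1 g2 g3 x0 w t = S.cl g1' g2' g3' x0 w t :=
    fun x0 w => cl_congr_g x0 w t h1 h2 h3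
  have e1 := Pi1p_congr t h1 h2 h3
  have e2 := Pi2p_congr t h1 h2 h3
  funext z
  simp only [Pi3p, e, e1, e2]

lemma Jp_congr {g1 g1' : S.G1p} {g2 g2' : S.St2} {g3 g3' : S.St3}
    (h1 : ∀ r < S.T, g1 r = g1' r) (h2 : ∀ r < S.T, g2 r = g2' r)
    (h3 : ∀ r < S.T, g3 r = g3' r) :
    S.Jp g1 g2 g3 = S.Jp g1' g2' g3' := by
  have e : ∀ x0 w, S.cl g1 g2 g3 x0 w S.T = S.cl g1' g2' g3' x0 w S.T :=
    fun x0 w => cl_congr_g x0 w S.T h1 h2 h3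
  simp only [Jp, e]

end Red3
namespace Red3

open Red3Aux

open scoped Classical

variable {S : Red3}

/-- Canonical representative `z³`-history for an information-state value. -/
noncomputable def rep3 (g1 : S.G1p) (g2 : S.St2) (g3 : S.St3) (t : ℕ)
    (π3 : Set (S.X t × Set (S.X t) × Set (S.X t × Set (S.X t)))) :
    ∀ ℓ : Fin t, S.Z3 (ℓ.1+1) :=
  if hc : ∃ c : ∀ ℓ : Fin t, S.Z3 (ℓ.1+1), S.Pi3p g1 g2 g3 t c = π3
  then hc.choose else (S.neH3 t).some

/-- Canonical representative `z²`-history. -/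
noncomputable def rep2 (g1 : S.G1p) (g2 : S.St2) (g3 : S.St3) (t : ℕ)
    (π2 : Set (S.X t × Set (S.X t)))
    (π3 : Set (S.X t × Set (S.X t) × Set (S.X t × Set (S.X t)))) :
    ∀ ℓ : Fin t, S.Z2 (ℓ.1+1) :=
  if hc : ∃ c : ∀ ℓ : Fin t, S.Z2 (ℓ.1+1), S.Pi2p g1 g2 g3 t c = π2 ∧
      (fun ℓ : Fin t => S.rho3 (ℓ.1+1) (c ℓ)) = rep3 g1 g2 g3 t π3
  then hc.choose else (S.neH2 t).some

/-- Canonical representative `z¹`-history. -/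
noncomputable def rep1 (g1 : S.G1p) (g2 : S.St2) (g3 : S.St3) (t : ℕ)
    (π1 : Set (S.X t)) (π2 : Set (S.X t × Set (S.X t)))
    (π3 : Set (S.X t × Set (S.X t) × Set (S.X t × Set (S.X t)))) :
    ∀ ℓ : Fin t, S.Z1 (ℓ.1+1) :=
  if hc : ∃ c : ∀ ℓ : Fin t, S.Z1 (ℓ.1+1), S.Pi1p g1 g2 g3 t c = π1 ∧
      (fun ℓ : Fin t => S.rho2 (ℓ.1+1) (c ℓ)) = rep2 g1 g2 g3 t π2 π3
  then hc.choose else (S.neH1 t).some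

lemma rep3_spec (g1 : S.G1p) (g2 : S.St2) (g3 : S.St3) (t : ℕ) (x0 : S.X 0)
    (w : ∀ r, S.W r) :
    S.Pi3p g1 g2 g3 t (rep3 g1 g2 g3 t (S.Pi3p g1 g2 g3 t (S.z3h g1 g2 g3 x0 w t)))
      = S.Pi3p g1 g2 g3 t (S.z3h g1 g2 g3 x0 w t) := by
  have hc : ∃ c : ∀ ℓ : Fin t, S.Z3 (ℓ.1+1),
      S.Pi3p g1 g2 g3 t c = S.Pi3p g1 g2 g3 t (S.z3h g1 g2 g3 x0 w t) :=
    ⟨S.z3h g1 g2 g3 x0 w t, rfl⟩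
  rw [rep3, dif_pos hc]
  exact hc.choose_spec

lemma rep2_spec (g1 : S.G1p) (g2 : S.St2) (g3 : S.St3) (t : ℕ) (x0 : S.X 0)
    (hx0 : x0 ∈ S.X0) (w : ∀ r, S.W r) :
    S.Pi2p g1 g2 g3 t (rep2 g1 g2 g3 t (S.Pi2p g1 g2 g3 t (S.z2h g1 g2 g3 x0 w t))
        (S.Pi3p g1 g2 g3 t (S.z3h g1 g2 g3 x0 w t)))
      = S.Pi2p g1 g2 g3 t (S.z2h g1 g2 g3 x0 w t) ∧
    (fun ℓ : Fin t => S.rho3 (ℓ.1+1)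
        (rep2 g1 g2 g3 t (S.Pi2p g1 g2 g3 t (S.z2h g1 g2 g3 x0 w t))
          (S.Pi3p g1 g2 g3 t (S.z3h g1 g2 g3 x0 w t)) ℓ))
      = rep3 g1 g2 g3 t (S.Pi3p g1 g2 g3 t (S.z3h g1 g2 g3 x0 w t)) := by
  have h3 := rep3_spec g1 g2 g3 t x0 w
  have hq : ((S.cl g1 g2 g3 x0 w t).1, S.Pi1p g1 g2 g3 t ((S.cl g1 g2 g3 x0 w t).2),
      S.Pi2p g1 g2 g3 t (fun ℓ => S.rho2 (ℓ.1+1) ((S.cl g1 g2 g3 x0 w t).2 ℓ)))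
      ∈ S.Pi3p g1 g2 g3 t (S.z3h g1 g2 g3 x0 w t) := ⟨x0, hx0, w, rfl, rfl⟩
  rw [← h3] at hq
  obtain ⟨y0, hy0, v, hv1, hv2⟩ := hq
  have h2c : S.Pi2p g1 g2 g3 t (fun ℓ => S.rho2 (ℓ.1+1) ((S.cl g1 g2 g3 x0 w t).2 ℓ))
      = S.Pi2p g1 g2 g3 t (fun ℓ => S.rho2 (ℓ.1+1) ((S.cl g1 g2 g3 y0 v t).2 ℓ)) :=
    congrArg (fun p => p.2.2) hv2
  have hc : ∃ c : ∀ ℓ : Fin t, S.Z2 (ℓ.1+1),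
      S.Pi2p g1 g2 g3 t c = S.Pi2p g1 g2 g3 t (S.z2h g1 g2 g3 x0 w t) ∧
      (fun ℓ : Fin t => S.rho3 (ℓ.1+1) (c ℓ))
        = rep3 g1 g2 g3 t (S.Pi3p g1 g2 g3 t (S.z3h g1 g2 g3 x0 w t)) :=
    ⟨fun ℓ => S.rho2 (ℓ.1+1) ((S.cl g1 g2 g3 y0 v t).2 ℓ), h2c.symm, hv1⟩
  rw [rep2, dif_pos hc]
  exact hc.choose_spec

lemma rep1_spec (g1 : S.G1p) (g2 : S.St2) (g3 : S.St3) (t : ℕ) (x0 : S.X 0)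
    (hx0 : x0 ∈ S.X0) (w : ∀ r, S.W r) :
    S.Pi1p g1 g2 g3 t (rep1 g1 g2 g3 t (S.Pi1p g1 g2 g3 t (S.z1h g1 g2 g3 x0 w t))
        (S.Pi2p g1 g2 g3 t (S.z2h g1 g2 g3 x0 w t))
        (S.Pi3p g1 g2 g3 t (S.z3h g1 g2 g3 x0 w t)))
      = S.Pi1p g1 g2 g3 t (S.z1h g1 g2 g3 x0 w t) ∧
    (fun ℓ : Fin t => S.rho2 (ℓ.1+1)
        (rep1 g1 g2 g3 t (S.Pi1p g1 g2 g3 t (S.z1h g1 g2 g3 x0 w t))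
          (S.Pi2p g1 g2 g3 t (S.z2h g1 g2 g3 x0 w t))
          (S.Pi3p g1 g2 g3 t (S.z3h g1 g2 g3 x0 w t)) ℓ))
      = rep2 g1 g2 g3 t (S.Pi2p g1 g2 g3 t (S.z2h g1 g2 g3 x0 w t))
          (S.Pi3p g1 g2 g3 t (S.z3h g1 g2 g3 x0 w t)) := by
  have h2 := rep2_spec g1 g2 g3 t x0 hx0 w
  have hq : ((S.cl g1 g2 g3 x0 w t).1, S.Pi1p g1 g2 g3 t ((S.cl g1 g2 g3 x0 w t).2))
      ∈ S.Pi2p g1 g2 g3 t (S.z2h g1 g2 g3 x0 w t) := ⟨x0, hx0, w, rfl, rfl⟩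
  rw [← h2.1] at hq
  obtain ⟨y0, hy0, v, hv1, hv2⟩ := hq
  have h1c : S.Pi1p g1 g2 g3 t ((S.cl g1 g2 g3 x0 w t).2)
      = S.Pi1p g1 g2 g3 t ((S.cl g1 g2 g3 y0 v t).2) := congrArg (fun p => p.2) hv2
  have hc : ∃ c : ∀ ℓ : Fin t, S.Z1 (ℓ.1+1),
      S.Pi1p g1 g2 g3 t c = S.Pi1p g1 g2 g3 t (S.z1h g1 g2 g3 x0 w t) ∧
      (fun ℓ : Fin t => S.rho2 (ℓ.1+1) (c ℓ))
        = rep2 g1 g2 g3 t (S.Pi2p g1 g2 g3 t (S.z2h g1 g2 g3 x0 w t))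
            (S.Pi3p g1 g2 g3 t (S.z3h g1 g2 g3 x0 w t)) :=
    ⟨(S.cl g1 g2 g3 y0 v t).2, h1c.symm, hv1⟩
  rw [rep1, dif_pos hc]
  exact hc.choose_spec

end Red3
namespace Red3

open Red3Aux

open scoped Classical

variable {S : Red3}

/-- The pass at time `t`, subsystem-1 strategy. -/
noncomputable def pg1 (g1 : S.G1p) (g2 : S.St2) (g3 : S.St3) (t : ℕ) : S.G1p := fun s h =>
  if hs : t ≤ s then
    if ∃ x0 ∈ S.X0, ∃ w : ∀ r, S.W r,
        S.z1h g1 g2 g3 x0 w t = prefH (fun n => S.Z1 (n+1)) hs h then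
      g1 s (graftH (fun n => S.Z1 (n+1)) t
        (rep1 g1 g2 g3 t (S.Pi1p g1 g2 g3 t (prefH (fun n => S.Z1 (n+1)) hs h))
          (S.Pi2p g1 g2 g3 t
            (fun ℓ => S.rho2 (ℓ.1+1) (prefH (fun n => S.Z1 (n+1)) hs h ℓ)))
          (S.Pi3p g1 g2 g3 t
            (fun ℓ => S.rho3 (ℓ.1+1) (S.rho2 (ℓ.1+1) (prefH (fun n => S.Z1 (n+1)) hs h ℓ))))) h)
    else g1 s h
  else g1 s h

/-- The pass at time `t`, subsystem-2 strategy. -/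
noncomputable def pg2 (g1 : S.G1p) (g2 : S.St2) (g3 : S.St3) (t : ℕ) : S.St2 := fun s h =>
  if hs : t ≤ s then
    if ∃ x0 ∈ S.X0, ∃ w : ∀ r, S.W r,
        S.z2h g1 g2 g3 x0 w t = prefH (fun n => S.Z2 (n+1)) hs h then
      g2 s (graftH (fun n => S.Z2 (n+1)) t
        (rep2 g1 g2 g3 t (S.Pi2p g1 g2 g3 t (prefH (fun n => S.Z2 (n+1)) hs h))
          (S.Pi3p g1 g2 g3 t
            (fun ℓ => S.rho3 (ℓ.1+1) (prefH (fun n => S.Z2 (n+1)) hs h ℓ)))) h)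
    else g2 s h
  else g2 s h

/-- The pass at time `t`, subsystem-3 strategy. -/
noncomputable def pg3 (g1 : S.G1p) (g2 : S.St2) (g3 : S.St3) (t : ℕ) : S.St3 := fun s h =>
  if hs : t ≤ s then
    if ∃ x0 ∈ S.X0, ∃ w : ∀ r, S.W r,
        S.z3h g1 g2 g3 x0 w t = prefH (fun n => S.Z3 (n+1)) hs h then
      g3 s (graftH (fun n => S.Z3 (n+1)) t
        (rep3 g1 g2 g3 t (S.Pi3p g1 g2 g3 t (prefH (fun n => S.Z3 (n+1)) hs h))) h)
    else g3 s h
  else g3 s h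

lemma pg1_agree (g1 : S.G1p) (g2 : S.St2) (g3 : S.St3) (t : ℕ) {r : ℕ} (hr : r < t) :
    pg1 g1 g2 g3 t r = g1 r := by
  funext h
  show dite _ _ _ = _
  rw [dif_neg (not_le_of_gt hr)]

lemma pg2_agree (g1 : S.G1p) (g2 : S.St2) (g3 : S.St3) (t : ℕ) {r : ℕ} (hr : r < t) :
    pg2 g1 g2 g3 t r = g2 r := by
  funext h
  show dite _ _ _ = _
  rw [dif_neg (not_le_of_gt hr)]

lemma pg3_agree (g1 : S.G1p) (g2 : S.St2) (g3 : S.St3) (t : ℕ) {r : ℕ} (hr : r < t) :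
    pg3 g1 g2 g3 t r = g3 r := by
  funext h
  show dite _ _ _ = _
  rw [dif_neg (not_le_of_gt hr)]

lemma pass_cl (g1 : S.G1p) (g2 : S.St2) (g3 : S.St3) (t : ℕ) (x0 : S.X 0) (w : ∀ r, S.W r)
    {s : ℕ} (hst : s ≤ t) :
    S.cl (pg1 g1 g2 g3 t) (pg2 g1 g2 g3 t) (pg3 g1 g2 g3 t) x0 w s = S.cl g1 g2 g3 x0 w s :=
  cl_congr_g x0 w s (fun r hr => pg1_agree g1 g2 g3 t (lt_of_lt_of_le hr hst))
    (fun r hr => pg2_agree g1 g2 g3 t (lt_of_lt_of_le hr hst))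
    (fun r hr => pg3_agree g1 g2 g3 t (lt_of_lt_of_le hr hst))

lemma pg1_eval (g1 : S.G1p) (g2 : S.St2) (g3 : S.St3) (t : ℕ) {s : ℕ} (hs : t ≤ s)
    (h : ∀ ℓ : Fin s, S.Z1 (ℓ.1+1)) (x0 : S.X 0) (hx0 : x0 ∈ S.X0) (w : ∀ r, S.W r)
    (hpref : prefH (fun n => S.Z1 (n+1)) hs h = S.z1h g1 g2 g3 x0 w t) :
    pg1 g1 g2 g3 t s h = g1 s (graftH (fun n => S.Z1 (n+1)) t
      (rep1 g1 g2 g3 t (S.Pi1p g1 g2 g3 t (S.z1h g1 g2 g3 x0 w t))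
        (S.Pi2p g1 g2 g3 t (S.z2h g1 g2 g3 x0 w t))
        (S.Pi3p g1 g2 g3 t (S.z3h g1 g2 g3 x0 w t))) h) := by
  show dite _ _ _ = _
  rw [dif_pos hs, if_pos ⟨x0, hx0, w, hpref.symm⟩]
  simp only [hpref]
  rfl

lemma pg2_eval (g1 : S.G1p) (g2 : S.St2) (g3 : S.St3) (t : ℕ) {s : ℕ} (hs : t ≤ s)
    (h : ∀ ℓ : Fin s, S.Z2 (ℓ.1+1)) (x0 : S.X 0) (hx0 : x0 ∈ S.X0) (w : ∀ r, S.W r)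
    (hpref : prefH (fun n => S.Z2 (n+1)) hs h = S.z2h g1 g2 g3 x0 w t) :
    pg2 g1 g2 g3 t s h = g2 s (graftH (fun n => S.Z2 (n+1)) t
      (rep2 g1 g2 g3 t (S.Pi2p g1 g2 g3 t (S.z2h g1 g2 g3 x0 w t))
        (S.Pi3p g1 g2 g3 t (S.z3h g1 g2 g3 x0 w t))) h) := by
  show dite _ _ _ = _
  rw [dif_pos hs, if_pos ⟨x0, hx0, w, hpref.symm⟩]
  simp only [hpref]
  rfl

lemma pg3_eval (g1 : S.G1p) (g2 : S.St2) (g3 : S.St3) (t : ℕ) {s : ℕ} (hs : t ≤ s)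
    (h : ∀ ℓ : Fin s, S.Z3 (ℓ.1+1)) (x0 : S.X 0) (hx0 : x0 ∈ S.X0) (w : ∀ r, S.W r)
    (hpref : prefH (fun n => S.Z3 (n+1)) hs h = S.z3h g1 g2 g3 x0 w t) :
    pg3 g1 g2 g3 t s h = g3 s (graftH (fun n => S.Z3 (n+1)) t
      (rep3 g1 g2 g3 t (S.Pi3p g1 g2 g3 t (S.z3h g1 g2 g3 x0 w t))) h) := by
  show dite _ _ _ = _
  rw [dif_pos hs, if_pos ⟨x0, hx0, w, hpref.symm⟩]
  simp only [hpref]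

end Red3
namespace Red3

open Red3Aux

open scoped Classical

variable {S : Red3}

lemma sim (g1 : S.G1p) (g2 : S.St2) (g3 : S.St3) (t : ℕ) (x0 : S.X 0) (hx0 : x0 ∈ S.X0)
    (w : ∀ r, S.W r) : ∀ s, t ≤ s →
    ∃ y0 ∈ S.X0, ∃ v : ∀ r, S.W r,
      (S.cl g1 g2 g3 y0 v s).1
        = (S.cl (pg1 g1 g2 g3 t) (pg2 g1 g2 g3 t) (pg3 g1 g2 g3 t) x0 w s).1 ∧
      (S.cl g1 g2 g3 y0 v s).2
        = graftH (fun n => S.Z1 (n+1)) t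
            (rep1 g1 g2 g3 t (S.Pi1p g1 g2 g3 t (S.z1h g1 g2 g3 x0 w t))
              (S.Pi2p g1 g2 g3 t (S.z2h g1 g2 g3 x0 w t))
              (S.Pi3p g1 g2 g3 t (S.z3h g1 g2 g3 x0 w t)))
            ((S.cl (pg1 g1 g2 g3 t) (pg2 g1 g2 g3 t) (pg3 g1 g2 g3 t) x0 w s).2) := by
  intro s hts
  induction s, hts using Nat.le_induction with
  | base =>
    have ecl := pass_cl g1 g2 g3 t x0 w (le_refl t)
    have hr1 := rep1_spec g1 g2 g3 t x0 hx0 w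
    have hmem : (S.cl g1 g2 g3 x0 w t).1
        ∈ S.Pi1p g1 g2 g3 t (rep1 g1 g2 g3 t (S.Pi1p g1 g2 g3 t (S.z1h g1 g2 g3 x0 w t))
            (S.Pi2p g1 g2 g3 t (S.z2h g1 g2 g3 x0 w t))
            (S.Pi3p g1 g2 g3 t (S.z3h g1 g2 g3 x0 w t))) := by
      rw [hr1.1]
      exact ⟨x0, hx0, w, rfl, rfl⟩
    obtain ⟨y0, hy0, v, hv1, hv2⟩ := hmem
    refine ⟨y0, hy0, v, ?_, ?_⟩
    · rw [hv2, ecl]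
    · rw [ecl, graftH_all]
      exact hv1
  | succ s hts ih =>
    obtain ⟨y0, hy0, v, h1, h2⟩ := ih
    have ew : ∀ r < s, v r = Function.update v s (w s) r :=
      fun r hr => (Function.update_of_ne (Nat.ne_of_lt hr) (w s) v).symm
    have ecls : S.cl g1 g2 g3 y0 (Function.update v s (w s)) s = S.cl g1 g2 g3 y0 v s :=
      (cl_congr_w g1 g2 g3 y0 s ew).symm
    have hprefs : prefH (fun n => S.Z1 (n+1)) hts
        ((S.cl (pg1 g1 g2 g3 t) (pg2 g1 g2 g3 t) (pg3 g1 g2 g3 t) x0 w s).2)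
        = S.z1h g1 g2 g3 x0 w t := by
      rw [z1h_pref (pg1 g1 g2 g3 t) (pg2 g1 g2 g3 t) (pg3 g1 g2 g3 t) x0 w hts,
        pass_cl g1 g2 g3 t x0 w (le_refl t)]
      rfl
    have hu1 := pg1_eval g1 g2 g3 t hts
      ((S.cl (pg1 g1 g2 g3 t) (pg2 g1 g2 g3 t) (pg3 g1 g2 g3 t) x0 w s).2) x0 hx0 w hprefs
    have hpref2 : prefH (fun n => S.Z2 (n+1)) hts
        (fun ℓ => S.rho2 (ℓ.1+1)
          ((S.cl (pg1 g1 g2 g3 t) (pg2 g1 g2 g3 t) (pg3 g1 g2 g3 t) x0 w s).2 ℓ))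
        = S.z2h g1 g2 g3 x0 w t :=
      funext fun ℓ => congrArg (S.rho2 (ℓ.1+1)) (congrFun hprefs ℓ)
    have hu2' := pg2_eval g1 g2 g3 t hts
      (fun ℓ => S.rho2 (ℓ.1+1)
        ((S.cl (pg1 g1 g2 g3 t) (pg2 g1 g2 g3 t) (pg3 g1 g2 g3 t) x0 w s).2 ℓ)) x0 hx0 w hpref2
    have hpref3 : prefH (fun n => S.Z3 (n+1)) hts
        (fun ℓ => S.rho3 (ℓ.1+1) (S.rho2 (ℓ.1+1)
          ((S.cl (pg1 g1 g2 g3 t) (pg2 g1 g2 g3 t) (pg3 g1 g2 g3 t) x0 w s).2 ℓ)))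
        = S.z3h g1 g2 g3 x0 w t :=
      funext fun ℓ => congrArg (fun z => S.rho3 (ℓ.1+1) (S.rho2 (ℓ.1+1) z)) (congrFun hprefs ℓ)
    have hu3' := pg3_eval g1 g2 g3 t hts
      (fun ℓ => S.rho3 (ℓ.1+1) (S.rho2 (ℓ.1+1)
        ((S.cl (pg1 g1 g2 g3 t) (pg2 g1 g2 g3 t) (pg3 g1 g2 g3 t) x0 w s).2 ℓ))) x0 hx0 w hpref3
    -- rewrite the grafted histories in hu2', hu3'
    have e2 : (fun ℓ : Fin s => S.rho2 (ℓ.1+1)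
        (graftH (fun n => S.Z1 (n+1)) t
          (rep1 g1 g2 g3 t (S.Pi1p g1 g2 g3 t (S.z1h g1 g2 g3 x0 w t))
            (S.Pi2p g1 g2 g3 t (S.z2h g1 g2 g3 x0 w t))
            (S.Pi3p g1 g2 g3 t (S.z3h g1 g2 g3 x0 w t)))
          ((S.cl (pg1 g1 g2 g3 t) (pg2 g1 g2 g3 t) (pg3 g1 g2 g3 t) x0 w s).2) ℓ))
        = graftH (fun n => S.Z2 (n+1)) t
            (rep2 g1 g2 g3 t (S.Pi2p g1 g2 g3 t (S.z2h g1 g2 g3 x0 w t))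
              (S.Pi3p g1 g2 g3 t (S.z3h g1 g2 g3 x0 w t)))
            (fun ℓ => S.rho2 (ℓ.1+1)
              ((S.cl (pg1 g1 g2 g3 t) (pg2 g1 g2 g3 t) (pg3 g1 g2 g3 t) x0 w s).2 ℓ)) := by
      rw [(rep1_spec g1 g2 g3 t x0 hx0 w).2.symm]
      exact graftH_map (fun n => S.Z1 (n+1)) (fun n => S.Z2 (n+1)) (fun n => S.rho2 (n+1)) t _ _
    have e3 : (fun ℓ : Fin s => S.rho3 (ℓ.1+1) (S.rho2 (ℓ.1+1)
        (graftH (fun n => S.Z1 (n+1)) t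
          (rep1 g1 g2 g3 t (S.Pi1p g1 g2 g3 t (S.z1h g1 g2 g3 x0 w t))
            (S.Pi2p g1 g2 g3 t (S.z2h g1 g2 g3 x0 w t))
            (S.Pi3p g1 g2 g3 t (S.z3h g1 g2 g3 x0 w t)))
          ((S.cl (pg1 g1 g2 g3 t) (pg2 g1 g2 g3 t) (pg3 g1 g2 g3 t) x0 w s).2) ℓ)))
        = graftH (fun n => S.Z3 (n+1)) t
            (rep3 g1 g2 g3 t (S.Pi3p g1 g2 g3 t (S.z3h g1 g2 g3 x0 w t)))
            (fun ℓ => S.rho3 (ℓ.1+1) (S.rho2 (ℓ.1+1)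
              ((S.cl (pg1 g1 g2 g3 t) (pg2 g1 g2 g3 t) (pg3 g1 g2 g3 t) x0 w s).2 ℓ))) := by
      have hr23 : (fun ℓ : Fin t => S.rho3 (ℓ.1+1) (S.rho2 (ℓ.1+1)
          (rep1 g1 g2 g3 t (S.Pi1p g1 g2 g3 t (S.z1h g1 g2 g3 x0 w t))
            (S.Pi2p g1 g2 g3 t (S.z2h g1 g2 g3 x0 w t))
            (S.Pi3p g1 g2 g3 t (S.z3h g1 g2 g3 x0 w t)) ℓ)))
          = rep3 g1 g2 g3 t (S.Pi3p g1 g2 g3 t (S.z3h g1 g2 g3 x0 w t)) := by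
        have ha := (rep1_spec g1 g2 g3 t x0 hx0 w).2
        have hb := (rep2_spec g1 g2 g3 t x0 hx0 w).2
        rw [← hb]
        exact funext fun ℓ => congrArg (S.rho3 (ℓ.1+1)) (congrFun ha ℓ)
      rw [← hr23]
      exact graftH_map (fun n => S.Z1 (n+1)) (fun n => S.Z3 (n+1))
        (fun n z => S.rho3 (n+1) (S.rho2 (n+1) z)) t _ _
    refine ⟨y0, hy0, Function.update v s (w s), ?_, ?_⟩
    · rw [cl_succ, cl_succ, ecls, h1, h2, e2, e3, hu1, hu2', hu3', Function.update_self]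
    · rw [cl_succ, cl_succ, graftH_snoc (fun n => S.Z1 (n+1)) hts, ecls, h1, h2,
        e2, e3, hu1, hu2', hu3', Function.update_self]

end Red3
namespace Red3

open Red3Aux

open scoped Classical

variable {S : Red3}

lemma Jset_nonempty (g1 : S.G1p) (g2 : S.St2) (g3 : S.St3) :
    {r : ℝ | ∃ x0 ∈ S.X0, ∃ w : ∀ r, S.W r, r = S.d (S.cl g1 g2 g3 x0 w S.T).1}.Nonempty :=
  ⟨_, S.X0ne.some, S.X0ne.some_mem, S.neW.some, rfl⟩

lemma Jset_finite (g1 : S.G1p) (g2 : S.St2) (g3 : S.St3) :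
    {r : ℝ | ∃ x0 ∈ S.X0, ∃ w : ∀ r, S.W r, r = S.d (S.cl g1 g2 g3 x0 w S.T).1}.Finite := by
  haveI := S.Xfin S.T
  refine (Set.finite_range S.d).subset ?_
  rintro r ⟨x0, hx0, w, rfl⟩
  exact ⟨_, rfl⟩

lemma Jp_mem_range (g1 : S.G1p) (g2 : S.St2) (g3 : S.St3) :
    S.Jp g1 g2 g3 ∈ Set.range S.d := by
  have := (Jset_nonempty g1 g2 g3).csSup_mem (Jset_finite g1 g2 g3)
  obtain ⟨x0, hx0, w, hr⟩ := this
  exact ⟨_, hr.symm⟩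

lemma pass_le (g1 : S.G1p) (g2 : S.St2) (g3 : S.St3) (t : ℕ) :
    S.Jp (pg1 g1 g2 g3 t) (pg2 g1 g2 g3 t) (pg3 g1 g2 g3 t) ≤ S.Jp g1 g2 g3 := by
  have hsub : {r : ℝ | ∃ x0 ∈ S.X0, ∃ w : ∀ r, S.W r,
        r = S.d (S.cl (pg1 g1 g2 g3 t) (pg2 g1 g2 g3 t) (pg3 g1 g2 g3 t) x0 w S.T).1}
      ⊆ {r : ℝ | ∃ x0 ∈ S.X0, ∃ w : ∀ r, S.W r, r = S.d (S.cl g1 g2 g3 x0 w S.T).1} := by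
    rintro r ⟨x0, hx0, w, rfl⟩
    by_cases htT : t ≤ S.T
    · obtain ⟨y0, hy0, v, hv1, -⟩ := sim g1 g2 g3 t x0 hx0 w S.T htT
      exact ⟨y0, hy0, v, by rw [hv1]⟩
    · exact ⟨x0, hx0, w, by rw [pass_cl g1 g2 g3 t x0 w (le_of_lt (not_le.1 htT))]⟩
  exact csSup_le_csSup (Jset_finite g1 g2 g3).bddAbove
    (Jset_nonempty (pg1 g1 g2 g3 t) (pg2 g1 g2 g3 t) (pg3 g1 g2 g3 t)) hsub

lemma pass_z1h (g1 : S.G1p) (g2 : S.St2) (g3 : S.St3) (t : ℕ) (x0 : S.X 0) (w : ∀ r, S.W r) :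
    S.z1h (pg1 g1 g2 g3 t) (pg2 g1 g2 g3 t) (pg3 g1 g2 g3 t) x0 w t = S.z1h g1 g2 g3 x0 w t :=
  congrArg Prod.snd (pass_cl g1 g2 g3 t x0 w (le_refl t))

lemma pass_z2h (g1 : S.G1p) (g2 : S.St2) (g3 : S.St3) (t : ℕ) (x0 : S.X 0) (w : ∀ r, S.W r) :
    S.z2h (pg1 g1 g2 g3 t) (pg2 g1 g2 g3 t) (pg3 g1 g2 g3 t) x0 w t = S.z2h g1 g2 g3 x0 w t :=
  funext fun ℓ => congrArg (S.rho2 (ℓ.1+1)) (congrFun (pass_z1h g1 g2 g3 t x0 w) ℓ)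

lemma pass_z3h (g1 : S.G1p) (g2 : S.St2) (g3 : S.St3) (t : ℕ) (x0 : S.X 0) (w : ∀ r, S.W r) :
    S.z3h (pg1 g1 g2 g3 t) (pg2 g1 g2 g3 t) (pg3 g1 g2 g3 t) x0 w t = S.z3h g1 g2 g3 x0 w t :=
  funext fun ℓ => congrArg (S.rho3 (ℓ.1+1)) (congrFun (pass_z2h g1 g2 g3 t x0 w) ℓ)

lemma pass_Pi1p (g1 : S.G1p) (g2 : S.St2) (g3 : S.St3) (t : ℕ) :
    S.Pi1p (pg1 g1 g2 g3 t) (pg2 g1 g2 g3 t) (pg3 g1 g2 g3 t) t = S.Pi1p g1 g2 g3 t :=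
  Pi1p_congr t (fun r hr => pg1_agree g1 g2 g3 t hr) (fun r hr => pg2_agree g1 g2 g3 t hr)
    (fun r hr => pg3_agree g1 g2 g3 t hr)

lemma pass_Pi2p (g1 : S.G1p) (g2 : S.St2) (g3 : S.St3) (t : ℕ) :
    S.Pi2p (pg1 g1 g2 g3 t) (pg2 g1 g2 g3 t) (pg3 g1 g2 g3 t) t = S.Pi2p g1 g2 g3 t :=
  Pi2p_congr t (fun r hr => pg1_agree g1 g2 g3 t hr) (fun r hr => pg2_agree g1 g2 g3 t hr)
    (fun r hr => pg3_agree g1 g2 g3 t hr)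

lemma pass_Pi3p (g1 : S.G1p) (g2 : S.St2) (g3 : S.St3) (t : ℕ) :
    S.Pi3p (pg1 g1 g2 g3 t) (pg2 g1 g2 g3 t) (pg3 g1 g2 g3 t) t = S.Pi3p g1 g2 g3 t :=
  Pi3p_congr t (fun r hr => pg1_agree g1 g2 g3 t hr) (fun r hr => pg2_agree g1 g2 g3 t hr)
    (fun r hr => pg3_agree g1 g2 g3 t hr)

lemma pass_act1 (g1 : S.G1p) (g2 : S.St2) (g3 : S.St3) (t : ℕ) (x0 : S.X 0)
    (hx0 : x0 ∈ S.X0) (w : ∀ r, S.W r) :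
    pg1 g1 g2 g3 t t (S.z1h g1 g2 g3 x0 w t)
      = g1 t (rep1 g1 g2 g3 t (S.Pi1p g1 g2 g3 t (S.z1h g1 g2 g3 x0 w t))
          (S.Pi2p g1 g2 g3 t (S.z2h g1 g2 g3 x0 w t))
          (S.Pi3p g1 g2 g3 t (S.z3h g1 g2 g3 x0 w t))) := by
  rw [pg1_eval g1 g2 g3 t (le_refl t) (S.z1h g1 g2 g3 x0 w t) x0 hx0 w
    (prefH_rfl _ _ _), graftH_all]

lemma pass_act2 (g1 : S.G1p) (g2 : S.St2) (g3 : S.St3) (t : ℕ) (x0 : S.X 0)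
    (hx0 : x0 ∈ S.X0) (w : ∀ r, S.W r) :
    pg2 g1 g2 g3 t t (S.z2h g1 g2 g3 x0 w t)
      = g2 t (rep2 g1 g2 g3 t (S.Pi2p g1 g2 g3 t (S.z2h g1 g2 g3 x0 w t))
          (S.Pi3p g1 g2 g3 t (S.z3h g1 g2 g3 x0 w t))) := by
  rw [pg2_eval g1 g2 g3 t (le_refl t) (S.z2h g1 g2 g3 x0 w t) x0 hx0 w
    (prefH_rfl _ _ _), graftH_all]

lemma pass_act3 (g1 : S.G1p) (g2 : S.St2) (g3 : S.St3) (t : ℕ) (x0 : S.X 0)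
    (hx0 : x0 ∈ S.X0) (w : ∀ r, S.W r) :
    pg3 g1 g2 g3 t t (S.z3h g1 g2 g3 x0 w t)
      = g3 t (rep3 g1 g2 g3 t (S.Pi3p g1 g2 g3 t (S.z3h g1 g2 g3 x0 w t))) := by
  rw [pg3_eval g1 g2 g3 t (le_refl t) (S.z3h g1 g2 g3 x0 w t) x0 hx0 w
    (prefH_rfl _ _ _), graftH_all]

end Red3
namespace Red3

open Red3Aux

open scoped Classical

variable {S : Red3}

/-- The sequence of profiles obtained by successive passes. -/
noncomputable def passSeq (g1 : S.G1p) (g2 : S.St2) (g3 : S.St3) :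
    ℕ → S.G1p × S.St2 × S.St3 :=
  fun n => Nat.rec (g1, g2, g3)
    (fun n p => (pg1 p.1 p.2.1 p.2.2 n, pg2 p.1 p.2.1 p.2.2 n, pg3 p.1 p.2.1 p.2.2 n)) n

lemma passSeq_succ (g1 : S.G1p) (g2 : S.St2) (g3 : S.St3) (n : ℕ) :
    passSeq g1 g2 g3 (n+1)
      = (pg1 (passSeq g1 g2 g3 n).1 (passSeq g1 g2 g3 n).2.1 (passSeq g1 g2 g3 n).2.2 n,
         pg2 (passSeq g1 g2 g3 n).1 (passSeq g1 g2 g3 n).2.1 (passSeq g1 g2 g3 n).2.2 n,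
         pg3 (passSeq g1 g2 g3 n).1 (passSeq g1 g2 g3 n).2.1 (passSeq g1 g2 g3 n).2.2 n) := rfl

lemma passSeq_stab (g1 : S.G1p) (g2 : S.St2) (g3 : S.St3) (s : ℕ) :
    ∀ n, s < n →
      (passSeq g1 g2 g3 n).1 s = (passSeq g1 g2 g3 (s+1)).1 s ∧
      (passSeq g1 g2 g3 n).2.1 s = (passSeq g1 g2 g3 (s+1)).2.1 s ∧
      (passSeq g1 g2 g3 n).2.2 s = (passSeq g1 g2 g3 (s+1)).2.2 s := by
  intro n hn
  induction n with
  | zero => omega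
  | succ n ih =>
    rcases Nat.lt_or_ge s n with h | h
    · obtain ⟨e1, e2, e3⟩ := ih h
      rw [passSeq_succ]
      exact ⟨(pg1_agree _ _ _ n h).trans e1, (pg2_agree _ _ _ n h).trans e2,
        (pg3_agree _ _ _ n h).trans e3⟩
    · have hns : n = s := by omega
      subst hns
      exact ⟨rfl, rfl, rfl⟩

lemma passSeq_le (g1 : S.G1p) (g2 : S.St2) (g3 : S.St3) (n : ℕ) :
    S.Jp (passSeq g1 g2 g3 n).1 (passSeq g1 g2 g3 n).2.1 (passSeq g1 g2 g3 n).2.2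
      ≤ S.Jp g1 g2 g3 := by
  induction n with
  | zero => exact le_refl _
  | succ n ih =>
    rw [passSeq_succ]
    exact (pass_le _ _ _ n).trans ih

end Red3
open Red3 in
/-- there is an optimal partial strategy profile in which each
subsystem's strategy depends on its reachable observation history only through
the tuple of its own and all higher-indexed information states. -/
theorem stmt12 (S : Red3) :
    ∃ (g1 : S.G1p) (g2 : S.St2) (g3 : S.St3),
      S.Jp g1 g2 g3 =
        sInf {r | ∃ (g1' : S.G1p) (g2' : S.St2) (g3' : S.St3), r = S.Jp g1' g2' g3'} ∧
      (∀ (t : ℕ), ∀ x0 ∈ S.X0, ∀ w : ∀ s, S.W s, ∀ x0' ∈ S.X0, ∀ w' : ∀ s, S.W s,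
        (S.Pi1p g1 g2 g3 t (S.z1h g1 g2 g3 x0 w t) =
           S.Pi1p g1 g2 g3 t (S.z1h g1 g2 g3 x0' w' t) ∧
         S.Pi2p g1 g2 g3 t (S.z2h g1 g2 g3 x0 w t) =
           S.Pi2p g1 g2 g3 t (S.z2h g1 g2 g3 x0' w' t) ∧
         S.Pi3p g1 g2 g3 t (S.z3h g1 g2 g3 x0 w t) =
           S.Pi3p g1 g2 g3 t (S.z3h g1 g2 g3 x0' w' t)) →
        g1 t (S.z1h g1 g2 g3 x0 w t) = g1 t (S.z1h g1 g2 g3 x0' w' t)) ∧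
      (∀ (t : ℕ), ∀ x0 ∈ S.X0, ∀ w : ∀ s, S.W s, ∀ x0' ∈ S.X0, ∀ w' : ∀ s, S.W s,
        (S.Pi2p g1 g2 g3 t (S.z2h g1 g2 g3 x0 w t) =
           S.Pi2p g1 g2 g3 t (S.z2h g1 g2 g3 x0' w' t) ∧
         S.Pi3p g1 g2 g3 t (S.z3h g1 g2 g3 x0 w t) =
           S.Pi3p g1 g2 g3 t (S.z3h g1 g2 g3 x0' w' t)) →
        g2 t (S.z2h g1 g2 g3 x0 w t) = g2 t (S.z2h g1 g2 g3 x0' w' t)) ∧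
      (∀ (t : ℕ), ∀ x0 ∈ S.X0, ∀ w : ∀ s, S.W s, ∀ x0' ∈ S.X0, ∀ w' : ∀ s, S.W s,
        S.Pi3p g1 g2 g3 t (S.z3h g1 g2 g3 x0 w t) =
          S.Pi3p g1 g2 g3 t (S.z3h g1 g2 g3 x0' w' t) →
        g3 t (S.z3h g1 g2 g3 x0 w t) = g3 t (S.z3h g1 g2 g3 x0' w' t)) := by
  classical
  haveI := S.Xfin S.T
  -- a minimizing profile exists, since all cost values lie in the range of `d`
  have hCsub : {r | ∃ (g1' : S.G1p) (g2' : S.St2) (g3' : S.St3), r = S.Jp g1' g2' g3'}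
      ⊆ Set.range S.d := by
    rintro r ⟨a, b, c, rfl⟩
    exact Jp_mem_range a b c
  have hCne : {r | ∃ (g1' : S.G1p) (g2' : S.St2) (g3' : S.St3),
      r = S.Jp g1' g2' g3'}.Nonempty :=
    ⟨S.Jp S.neG1p.some S.neSt2.some S.neSt3.some, S.neG1p.some, S.neSt2.some, S.neSt3.some, rfl⟩
  have hCfin : {r | ∃ (g1' : S.G1p) (g2' : S.St2) (g3' : S.St3),
      r = S.Jp g1' g2' g3'}.Finite := (Set.finite_range S.d).subset hCsub
  obtain ⟨ga, gb, gc, hga⟩ := hCne.csInf_mem hCfin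
  -- the limit profile of the pass sequence
  set G := passSeq ga gb gc with hG
  refine ⟨fun s => (G (s+1)).1 s, fun s => (G (s+1)).2.1 s, fun s => (G (s+1)).2.2 s,
    ?_, ?_, ?_, ?_⟩
  · -- optimality
    have h1 : ∀ r < S.T, (fun s => (G (s+1)).1 s) r = (G S.T).1 r :=
      fun r hr => ((passSeq_stab ga gb gc r S.T hr).1).symm
    have h2 : ∀ r < S.T, (fun s => (G (s+1)).2.1 s) r = (G S.T).2.1 r :=
      fun r hr => ((passSeq_stab ga gb gc r S.T hr).2.1).symm
    have h3 : ∀ r < S.T, (fun s => (G (s+1)).2.2 s) r = (G S.T).2.2 r :=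
      fun r hr => ((passSeq_stab ga gb gc r S.T hr).2.2).symm
    have hJeq : S.Jp (fun s => (G (s+1)).1 s) (fun s => (G (s+1)).2.1 s)
        (fun s => (G (s+1)).2.2 s) = S.Jp (G S.T).1 (G S.T).2.1 (G S.T).2.2 :=
      Jp_congr h1 h2 h3
    have hle : S.Jp (fun s => (G (s+1)).1 s) (fun s => (G (s+1)).2.1 s)
        (fun s => (G (s+1)).2.2 s)
        ≤ sInf {r | ∃ (g1' : S.G1p) (g2' : S.St2) (g3' : S.St3), r = S.Jp g1' g2' g3'} := by
      rw [hJeq, hga]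
      exact passSeq_le ga gb gc S.T
    have hge : sInf {r | ∃ (g1' : S.G1p) (g2' : S.St2) (g3' : S.St3), r = S.Jp g1' g2' g3'}
        ≤ S.Jp (fun s => (G (s+1)).1 s) (fun s => (G (s+1)).2.1 s)
          (fun s => (G (s+1)).2.2 s) :=
      csInf_le hCfin.bddBelow ⟨_, _, _, rfl⟩
    exact le_antisymm hle hge
  all_goals {
    intro t x0 hx0 w x0' hx0' w' hyp
    have ha1 : ∀ r < t, (fun s => (G (s+1)).1 s) r = (G (t+1)).1 r :=
      fun r hr => ((passSeq_stab ga gb gc r (t+1) (by omega)).1).symm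
    have ha2 : ∀ r < t, (fun s => (G (s+1)).2.1 s) r = (G (t+1)).2.1 r :=
      fun r hr => ((passSeq_stab ga gb gc r (t+1) (by omega)).2.1).symm
    have ha3 : ∀ r < t, (fun s => (G (s+1)).2.2 s) r = (G (t+1)).2.2 r :=
      fun r hr => ((passSeq_stab ga gb gc r (t+1) (by omega)).2.2).symm
    have hb1 : ∀ r < t, (fun s => (G (s+1)).1 s) r = (G t).1 r :=
      fun r hr => (ha1 r hr).trans (pg1_agree _ _ _ t hr)
    have hb2 : ∀ r < t, (fun s => (G (s+1)).2.1 s) r = (G t).2.1 r :=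
      fun r hr => (ha2 r hr).trans (pg2_agree _ _ _ t hr)
    have hb3 : ∀ r < t, (fun s => (G (s+1)).2.2 s) r = (G t).2.2 r :=
      fun r hr => (ha3 r hr).trans (pg3_agree _ _ _ t hr)
    have ecl : ∀ (y0 : S.X 0) (v : ∀ r, S.W r),
        S.cl (fun s => (G (s+1)).1 s) (fun s => (G (s+1)).2.1 s)
          (fun s => (G (s+1)).2.2 s) y0 v t = S.cl (G t).1 (G t).2.1 (G t).2.2 y0 v t :=
      fun y0 v => cl_congr_g y0 v t hb1 hb2 hb3
    have hz1 : ∀ (y0 : S.X 0) (v : ∀ r, S.W r),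
        S.z1h (fun s => (G (s+1)).1 s) (fun s => (G (s+1)).2.1 s)
          (fun s => (G (s+1)).2.2 s) y0 v t = S.z1h (G t).1 (G t).2.1 (G t).2.2 y0 v t :=
      fun y0 v => congrArg Prod.snd (ecl y0 v)
    have hz2 : ∀ (y0 : S.X 0) (v : ∀ r, S.W r),
        S.z2h (fun s => (G (s+1)).1 s) (fun s => (G (s+1)).2.1 s)
          (fun s => (G (s+1)).2.2 s) y0 v t = S.z2h (G t).1 (G t).2.1 (G t).2.2 y0 v t :=
      fun y0 v => funext fun ℓ => congrArg (S.rho2 (ℓ.1+1)) (congrFun (hz1 y0 v) ℓ)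
    have hz3 : ∀ (y0 : S.X 0) (v : ∀ r, S.W r),
        S.z3h (fun s => (G (s+1)).1 s) (fun s => (G (s+1)).2.1 s)
          (fun s => (G (s+1)).2.2 s) y0 v t = S.z3h (G t).1 (G t).2.1 (G t).2.2 y0 v t :=
      fun y0 v => funext fun ℓ => congrArg (S.rho3 (ℓ.1+1)) (congrFun (hz2 y0 v) ℓ)
    have hP1 : S.Pi1p (fun s => (G (s+1)).1 s) (fun s => (G (s+1)).2.1 s)
        (fun s => (G (s+1)).2.2 s) t = S.Pi1p (G t).1 (G t).2.1 (G t).2.2 t :=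
      Pi1p_congr t hb1 hb2 hb3
    have hP2 : S.Pi2p (fun s => (G (s+1)).1 s) (fun s => (G (s+1)).2.1 s)
        (fun s => (G (s+1)).2.2 s) t = S.Pi2p (G t).1 (G t).2.1 (G t).2.2 t :=
      Pi2p_congr t hb1 hb2 hb3
    have hP3 : S.Pi3p (fun s => (G (s+1)).1 s) (fun s => (G (s+1)).2.1 s)
        (fun s => (G (s+1)).2.2 s) t = S.Pi3p (G t).1 (G t).2.1 (G t).2.2 t :=
      Pi3p_congr t hb1 hb2 hb3
    first
    | -- condition for subsystem 1
      (obtain ⟨hyp1, hyp2, hyp3⟩ := hyp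
       rw [hP1, hz1 x0 w, hz1 x0' w'] at hyp1
       rw [hP2, hz2 x0 w, hz2 x0' w'] at hyp2
       rw [hP3, hz3 x0 w, hz3 x0' w'] at hyp3
       show (G (t+1)).1 t _ = (G (t+1)).1 t _
       rw [show ((G (t+1)).1 : S.G1p) t = pg1 (G t).1 (G t).2.1 (G t).2.2 t t from rfl,
         hz1 x0 w, hz1 x0' w',
         pass_act1 (G t).1 (G t).2.1 (G t).2.2 t x0 hx0 w,
         pass_act1 (G t).1 (G t).2.1 (G t).2.2 t x0' hx0' w', hyp1, hyp2, hyp3])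
    | -- condition for subsystem 2
      (obtain ⟨hyp2, hyp3⟩ := hyp
       rw [hP2, hz2 x0 w, hz2 x0' w'] at hyp2
       rw [hP3, hz3 x0 w, hz3 x0' w'] at hyp3
       show (G (t+1)).2.1 t _ = (G (t+1)).2.1 t _
       rw [show ((G (t+1)).2.1 : S.St2) t = pg2 (G t).1 (G t).2.1 (G t).2.2 t t from rfl,
         hz2 x0 w, hz2 x0' w',
         pass_act2 (G t).1 (G t).2.1 (G t).2.2 t x0 hx0 w,
         pass_act2 (G t).1 (G t).2.1 (G t).2.2 t x0' hx0' w', hyp2, hyp3])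
    | -- condition for subsystem 3
      (rw [hP3, hz3 x0 w, hz3 x0' w'] at hyp
       show (G (t+1)).2.2 t _ = (G (t+1)).2.2 t _
       rw [show ((G (t+1)).2.2 : S.St3) t = pg3 (G t).1 (G t).2.1 (G t).2.2 t t from rfl,
         hz3 x0 w, hz3 x0' w',
         pass_act3 (G t).1 (G t).2.1 (G t).2.2 t x0 hx0 w,
         pass_act3 (G t).1 (G t).2.1 (G t).2.2 t x0' hx0' w', hyp])
  }
end
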